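/- arXiv:2011.14482 — 4 statements merged into one kernel-verified Lean document; each statement's English description precedes it below -/
import Mathlib

section
/- Let G = (V, E) be a binary hypergraph in which every vertex is incident to at least one edge. Then G admits a fractional edge packing W of total weight τ(G) such that (1) the weight of every vertex X ∈ V under W is either 0 or 1, and (2) if Z denotes the set of vertices of V with weight 0 under W, then ρ(G) − τ(G) = |Z|. -/
open scoped BigOperators Classical

namespace BinaryJoins

/-! ### Hypergraphs, fractional edge coverings and packings

A hypergraph is given by a finite vertex set `V : Finset α` and a finite
edge set `E : Finset (Finset α)`.  A weight assignment is a function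
`W : Finset α → ℝ` (only its values on `E` matter). -/

variable {α : Type} [DecidableEq α]

/-- The weight of a vertex `X`: the sum of the weights of all edges incident to `X`. -/
def vertexWeight (E : Finset (Finset α)) (W : Finset α → ℝ) (X : α) : ℝ :=
  ∑ e ∈ E.filter (fun e => X ∈ e), W e

/-- `W` is a fractional edge covering: edge weights lie in `[0,1]` and every
vertex of `V` has weight at least 1. -/
def IsFracEdgeCover (V : Finset α) (E : Finset (Finset α)) (W : Finset α → ℝ) : Prop :=
  (∀ e ∈ E, 0 ≤ W e ∧ W e ≤ 1) ∧ ∀ X ∈ V, 1 ≤ vertexWeight E W X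

/-- `W` is a fractional edge packing: edge weights lie in `[0,1]` and every
vertex of `V` has weight at most 1. -/
def IsFracEdgePack (V : Finset α) (E : Finset (Finset α)) (W : Finset α → ℝ) : Prop :=
  (∀ e ∈ E, 0 ≤ W e ∧ W e ≤ 1) ∧ ∀ X ∈ V, vertexWeight E W X ≤ 1

/-- The fractional edge covering number `ρ`: the smallest total weight of a
fractional edge covering. -/
noncomputable def rho (V : Finset α) (E : Finset (Finset α)) : ℝ :=
  sInf {t | ∃ W : Finset α → ℝ, IsFracEdgeCover V E W ∧ t = ∑ e ∈ E, W e}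

/-- The fractional edge packing number `τ`: the largest total weight of a
fractional edge packing. -/
noncomputable def tau (V : Finset α) (E : Finset (Finset α)) : ℝ :=
  sSup {t | ∃ W : Finset α → ℝ, IsFracEdgePack V E W ∧ t = ∑ e ∈ E, W e}

/-- A binary hypergraph: every edge is a 2-element subset of `V`, and every
vertex is incident to at least one edge. -/
def BinaryHG (V : Finset α) (E : Finset (Finset α)) : Prop :=
  (∀ e ∈ E, e ⊆ V ∧ e.card = 2) ∧ ∀ X ∈ V, ∃ e ∈ E, X ∈ e


-- basic lemmas
lemma vw_nonneg (E : Finset (Finset α)) (W : Finset α → ℝ) (h : ∀ e ∈ E, 0 ≤ W e) (X : α) :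
    0 ≤ vertexWeight E W X := by
  apply Finset.sum_nonneg
  intro e he; exact h e (Finset.mem_filter.mp he).1

lemma single_le_vw (E : Finset (Finset α)) (W : Finset α → ℝ) (h : ∀ e ∈ E, 0 ≤ W e)
    {f : Finset α} (hf : f ∈ E) {X : α} (hX : X ∈ f) : W f ≤ vertexWeight E W X := by
  apply Finset.single_le_sum (f := fun e => W e)
  · intro e he; exact h e (Finset.mem_filter.mp he).1
  · exact Finset.mem_filter.mpr ⟨hf, hX⟩

lemma vw_mono (E : Finset (Finset α)) (W W' : Finset α → ℝ) (h : ∀ e ∈ E, W e ≤ W' e) (X : α) :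
    vertexWeight E W X ≤ vertexWeight E W' X := by
  apply Finset.sum_le_sum
  intro e he; exact h e (Finset.mem_filter.mp he).1

lemma vw_add_smul (E : Finset (Finset α)) (W d : Finset α → ℝ) (s : ℝ) (X : α) :
    vertexWeight E (fun e => W e + s * d e) X
      = vertexWeight E W X + s * vertexWeight E d X := by
  unfold vertexWeight
  rw [Finset.mul_sum, ← Finset.sum_add_distrib]

lemma vw_update (E : Finset (Finset α)) (W : Finset α → ℝ) {f : Finset α} (hf : f ∈ E)
    (t : ℝ) (X : α) :
    vertexWeight E (Function.update W f t) X
      = if X ∈ f then vertexWeight E W X + (t - W f) else vertexWeight E W X := by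
  unfold vertexWeight
  by_cases hX : X ∈ f
  · simp only [hX, if_true]
    have hmem : f ∈ E.filter (fun e => X ∈ e) := Finset.mem_filter.mpr ⟨hf, hX⟩
    rw [← Finset.add_sum_erase _ _ hmem, ← Finset.add_sum_erase _ _ hmem]
    have : ∑ e ∈ (E.filter (fun e => X ∈ e)).erase f, Function.update W f t e
        = ∑ e ∈ (E.filter (fun e => X ∈ e)).erase f, W e := by
      apply Finset.sum_congr rfl
      intro e he
      rw [Function.update_of_ne (Finset.ne_of_mem_erase he)]
    rw [this, Function.update_self]; ring
  · simp only [hX, if_false]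
    apply Finset.sum_congr rfl
    intro e he
    have : e ≠ f := by
      rintro rfl; exact hX (Finset.mem_filter.mp he).2
    rw [Function.update_of_ne this]

lemma sum_update (E : Finset (Finset α)) (W : Finset α → ℝ) {f : Finset α} (hf : f ∈ E)
    (t : ℝ) : ∑ e ∈ E, Function.update W f t e = (∑ e ∈ E, W e) + (t - W f) := by
  rw [← Finset.add_sum_erase _ _ hf, ← Finset.add_sum_erase _ _ hf]
  have : ∑ e ∈ E.erase f, Function.update W f t e = ∑ e ∈ E.erase f, W e := by
    apply Finset.sum_congr rfl
    intro e he; rw [Function.update_of_ne (Finset.ne_of_mem_erase he)]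
  rw [this, Function.update_self]; ring

-- pair edges
lemma pair_eq {e : Finset α} (h2 : e.card = 2) {a b : α} (ha : a ∈ e) (hb : b ∈ e)
    (hab : a ≠ b) : e = {a, b} := by
  apply Finset.eq_of_subset_of_card_le
  · intro x hx
    rcases Finset.card_eq_two.mp h2 with ⟨u, v, huv, rfl⟩
    simp only [Finset.mem_insert, Finset.mem_singleton] at ha hb hx ⊢
    rcases ha with rfl|rfl <;> rcases hb with rfl|rfl <;> tauto
  · rw [h2]; exact Finset.card_insert_le _ _ |>.trans (by simp)

lemma other_endpoint {e : Finset α} (h2 : e.card = 2) {a : α} (ha : a ∈ e) :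
    ∃ b ∈ e, b ≠ a ∧ e = {a, b} := by
  rcases Finset.card_eq_two.mp h2 with ⟨u, v, huv, rfl⟩
  simp only [Finset.mem_insert, Finset.mem_singleton] at ha
  rcases ha with rfl|rfl
  · exact ⟨v, by simp, Ne.symm huv, rfl⟩
  · exact ⟨u, by simp, huv, by rw [Finset.pair_comm]⟩

lemma mem_pair_iff {e : Finset α} {a b x : α} (he : e = {a, b}) :
    x ∈ e ↔ x = a ∨ x = b := by subst he; simp

-- handshake
lemma handshake (V : Finset α) (E : Finset (Finset α))
    (hE : ∀ e ∈ E, e ⊆ V ∧ e.card = 2) (W : Finset α → ℝ) :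
    ∑ x ∈ V, vertexWeight E W x = 2 * ∑ e ∈ E, W e := by
  unfold vertexWeight
  have : ∀ x ∈ V, ∑ e ∈ E.filter (fun e => x ∈ e), W e
      = ∑ e ∈ E, if x ∈ e then W e else 0 := by
    intro x _; rw [Finset.sum_filter]
  rw [Finset.sum_congr rfl this, Finset.sum_comm]
  rw [Finset.mul_sum]
  apply Finset.sum_congr rfl
  intro e he
  rw [Finset.sum_ite_mem]
  have hi : V ∩ e = e := Finset.inter_eq_right.mpr (hE e he).1
  rw [hi, Finset.sum_const, (hE e he).2]
  push_cast; ring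

-- alternating sums
lemma altsum (k : ℕ) : ∑ i ∈ Finset.range k, (-1 : ℝ)^i = if Even k then 0 else 1 := by
  induction k with
  | zero => simp
  | succ n ih =>
      rw [Finset.sum_range_succ, ih]
      by_cases h : Even n
      · simp [h, Even.neg_one_pow h, Nat.even_add_one, h]
      · have ho : Odd n := Nat.odd_iff.mpr (Nat.not_even_iff.mp h)
        simp [h, Odd.neg_one_pow ho, Nat.even_add_one, h]

lemma altsum_nonneg (k : ℕ) : (0:ℝ) ≤ ∑ i ∈ Finset.range k, (-1 : ℝ)^i := by
  rw [altsum]; split <;> norm_num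

-- measure of a packing
noncomputable def meas (V : Finset α) (E : Finset (Finset α)) (W : Finset α → ℝ) : ℕ :=
  (V.card + 1) * (E.filter (fun e => 0 < W e ∧ W e < 1)).card
    + (V.filter (fun x => vertexWeight E W x < 1)).card

lemma unsat_card_le (V : Finset α) (E : Finset (Finset α)) (W : Finset α → ℝ) :
    (V.filter (fun x => vertexWeight E W x < 1)).card ≤ V.card :=
  Finset.card_le_card (Finset.filter_subset _ _)

/-- The key perturbation lemma. -/
lemma perturb (V : Finset α) (E : Finset (Finset α)) (W : Finset α → ℝ)
    (hW : IsFracEdgePack V E W) (d : Finset α → ℝ)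
    (hfrac : ∀ e ∈ E, 0 < W e ∧ W e < 1)
    (hpos : ∀ x ∈ V, vertexWeight E d x ≠ 0 → vertexWeight E W x < 1)
    (hsum : 0 ≤ ∑ e ∈ E, d e)
    (hne : ∃ e ∈ E, d e ≠ 0) :
    ∃ W' : Finset α → ℝ, IsFracEdgePack V E W' ∧
      (∑ e ∈ E, W e) ≤ (∑ e ∈ E, W' e) ∧ meas V E W' < meas V E W := by
  classical
  obtain ⟨e₀, he₀, hd₀⟩ := hne
  set F := E.filter (fun e => d e ≠ 0) with hF
  have hFne : F.Nonempty := ⟨e₀, Finset.mem_filter.mpr ⟨he₀, hd₀⟩⟩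
  set room : Finset α → ℝ := fun e => if 0 < d e then (1 - W e)/(d e) else (W e)/(-(d e))
    with hroom
  have hroompos : ∀ e ∈ F, 0 < room e := by
    intro e heF
    obtain ⟨heE, hde⟩ := Finset.mem_filter.mp heF
    obtain ⟨h0, h1⟩ := hfrac e heE
    by_cases hd : 0 < d e
    · simp only [hroom, hd, if_true]
      apply div_pos (by linarith) hd
    · have hd' : d e < 0 := lt_of_le_of_ne (not_lt.mp hd) hde
      simp only [hroom, hd, if_false]
      apply div_pos h0 (by linarith)
  set s₁ := F.inf' hFne room with hs₁
  have hs₁pos : 0 < s₁ := by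
    rw [hs₁, Finset.lt_inf'_iff]; exact hroompos
  set A := V.filter (fun x => 0 < vertexWeight E d x) with hA
  set vroom : α → ℝ := fun x => (1 - vertexWeight E W x)/(vertexWeight E d x) with hvroom
  have hvroompos : ∀ x ∈ A, 0 < vroom x := by
    intro x hx
    obtain ⟨hxV, hdx⟩ := Finset.mem_filter.mp hx
    have := hpos x hxV (ne_of_gt hdx)
    simp only [hvroom]
    apply div_pos (by linarith) hdx
  set s : ℝ := if hAne : A.Nonempty then min s₁ (A.inf' hAne vroom) else s₁ with hs
  have hspos : 0 < s := by
    rw [hs]; split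
    · rename_i hAne
      apply lt_min hs₁pos
      rw [Finset.lt_inf'_iff]; exact hvroompos
    · exact hs₁pos
  have hss₁ : s ≤ s₁ := by
    rw [hs]; split
    · exact min_le_left _ _
    · exact le_rfl
  have hsedge : ∀ e ∈ F, s ≤ room e := fun e he => hss₁.trans (Finset.inf'_le _ he)
  have hsvert : ∀ x ∈ A, s ≤ vroom x := by
    intro x hx
    rw [hs]
    have hAne : A.Nonempty := ⟨x, hx⟩
    simp only [hAne, dif_pos]
    exact (min_le_right _ _).trans (Finset.inf'_le _ hx)
  set W' : Finset α → ℝ := fun e => W e + s * d e with hW'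
  -- edge bounds
  have hedge : ∀ e ∈ E, 0 ≤ W' e ∧ W' e ≤ 1 := by
    intro e heE
    by_cases hde : d e = 0
    · simp only [hW', hde, mul_zero, add_zero]
      exact ⟨(hfrac e heE).1.le, (hfrac e heE).2.le⟩
    · have heF : e ∈ F := Finset.mem_filter.mpr ⟨heE, hde⟩
      obtain ⟨h0, h1⟩ := hfrac e heE
      have hre := hsedge e heF
      by_cases hd : 0 < d e
      · constructor
        · have : 0 ≤ s * d e := by positivity
          simp only [hW']; linarith
        · simp only [hroom, hd, if_true] at hre
          have : s * d e ≤ 1 - W e := by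
            rw [div_eq_mul_inv] at hre
            calc s * d e ≤ ((1 - W e) * (d e)⁻¹) * d e := by
                  apply mul_le_mul_of_nonneg_right hre hd.le
              _ = 1 - W e := by field_simp
          simp only [hW']; linarith
      · have hd' : d e < 0 := lt_of_le_of_ne (not_lt.mp hd) hde
        constructor
        · simp only [hroom, hd, if_false] at hre
          have : s * (-(d e)) ≤ W e := by
            rw [div_eq_mul_inv] at hre
            calc s * (-(d e)) ≤ (W e * (-(d e))⁻¹) * (-(d e)) := by
                  apply mul_le_mul_of_nonneg_right hre (by linarith)
              _ = W e := by field_simp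
          simp only [hW']; nlinarith
        · have : s * d e ≤ 0 := mul_nonpos_of_nonneg_of_nonpos hspos.le hd'.le
          simp only [hW']; linarith
  -- vertex bounds
  have hvw : ∀ x, vertexWeight E W' x = vertexWeight E W x + s * vertexWeight E d x :=
    fun x => vw_add_smul E W d s x
  have hvert : ∀ x ∈ V, vertexWeight E W' x ≤ 1 := by
    intro x hxV
    rw [hvw]
    rcases lt_trichotomy (vertexWeight E d x) 0 with h|h|h
    · have : s * vertexWeight E d x ≤ 0 := mul_nonpos_of_nonneg_of_nonpos hspos.le h.le
      have := hW.2 x hxV; linarith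
    · rw [h, mul_zero, add_zero]; exact hW.2 x hxV
    · have hxA : x ∈ A := Finset.mem_filter.mpr ⟨hxV, h⟩
      have hrv := hsvert x hxA
      simp only [hvroom] at hrv
      have : s * vertexWeight E d x ≤ 1 - vertexWeight E W x := by
        rw [div_eq_mul_inv] at hrv
        calc s * vertexWeight E d x
            ≤ ((1 - vertexWeight E W x) * (vertexWeight E d x)⁻¹) * vertexWeight E d x := by
              apply mul_le_mul_of_nonneg_right hrv h.le
          _ = 1 - vertexWeight E W x := by field_simp
      linarith
  have hpack' : IsFracEdgePack V E W' := ⟨hedge, hvert⟩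
  -- total
  have htot : (∑ e ∈ E, W e) ≤ (∑ e ∈ E, W' e) := by
    have : ∑ e ∈ E, W' e = (∑ e ∈ E, W e) + s * ∑ e ∈ E, d e := by
      simp only [hW', Finset.mul_sum, Finset.sum_add_distrib]
    rw [this]
    have : 0 ≤ s * ∑ e ∈ E, d e := by positivity
    linarith
  -- measure decreases
  have hfracsub : (E.filter (fun e => 0 < W' e ∧ W' e < 1)) ⊆
      (E.filter (fun e => 0 < W e ∧ W e < 1)) := by
    intro e he
    obtain ⟨heE, _⟩ := Finset.mem_filter.mp he
    exact Finset.mem_filter.mpr ⟨heE, hfrac e heE⟩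
  have hunsatsub : (V.filter (fun x => vertexWeight E W' x < 1)) ⊆
      (V.filter (fun x => vertexWeight E W x < 1)) := by
    intro x hx
    obtain ⟨hxV, hx1⟩ := Finset.mem_filter.mp hx
    refine Finset.mem_filter.mpr ⟨hxV, ?_⟩
    by_cases hdx : vertexWeight E d x = 0
    · rw [hvw, hdx, mul_zero, add_zero] at hx1; exact hx1
    · exact hpos x hxV hdx
  -- tightness
  have key : (∃ e ∈ E, e ∈ (E.filter (fun e => 0 < W e ∧ W e < 1)) ∧
        e ∉ (E.filter (fun e => 0 < W' e ∧ W' e < 1)))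
      ∨ (∃ x, x ∈ (V.filter (fun x => vertexWeight E W x < 1)) ∧
        x ∉ (V.filter (fun x => vertexWeight E W' x < 1))) := by
    by_cases hAne : A.Nonempty
    · have hsmin : s = min s₁ (A.inf' hAne vroom) := by rw [hs]; simp [hAne]
      rcases le_total s₁ (A.inf' hAne vroom) with hle|hle
      · -- edge tight
        left
        obtain ⟨e₁, he₁F, he₁⟩ := Finset.exists_mem_eq_inf' hFne room
        have hseq : s = room e₁ := by rw [hsmin, min_eq_left hle, ← he₁]
        obtain ⟨he₁E, hde₁⟩ := Finset.mem_filter.mp he₁F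
        refine ⟨e₁, he₁E, Finset.mem_filter.mpr ⟨he₁E, hfrac e₁ he₁E⟩, ?_⟩
        intro hmem
        obtain ⟨-, h0, h1⟩ := Finset.mem_filter.mp hmem
        by_cases hd : 0 < d e₁
        · have : W' e₁ = 1 := by
            simp only [hW', hseq, hroom, hd, if_true]; field_simp; ring
          rw [this] at h1; exact lt_irrefl _ h1
        · have hd' : d e₁ < 0 := lt_of_le_of_ne (not_lt.mp hd) hde₁
          have h9 : W e₁ / -d e₁ * d e₁ = -W e₁ := by
            rw [div_mul_eq_mul_div, div_eq_iff (neg_ne_zero.mpr hde₁)]; ring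
          have : W' e₁ = 0 := by
            simp only [hW', hseq, hroom, hd, if_false, h9]; ring
          rw [this] at h0; exact lt_irrefl _ h0
      · -- vertex tight
        right
        obtain ⟨x₁, hx₁A, hx₁⟩ := Finset.exists_mem_eq_inf' hAne vroom
        have hseq : s = vroom x₁ := by rw [hsmin, min_eq_right hle, ← hx₁]
        obtain ⟨hx₁V, hdx₁⟩ := Finset.mem_filter.mp hx₁A
        have hunsat : vertexWeight E W x₁ < 1 := hpos x₁ hx₁V (ne_of_gt hdx₁)
        refine ⟨x₁, Finset.mem_filter.mpr ⟨hx₁V, hunsat⟩, ?_⟩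
        intro hmem
        obtain ⟨-, h1⟩ := Finset.mem_filter.mp hmem
        have : vertexWeight E W' x₁ = 1 := by
          rw [hvw, hseq]; simp only [hvroom]; field_simp; ring
        rw [this] at h1; exact lt_irrefl _ h1
    · -- A empty: s = s₁, edge tight
      left
      have hsmin : s = s₁ := by rw [hs]; simp [hAne]
      obtain ⟨e₁, he₁F, he₁⟩ := Finset.exists_mem_eq_inf' hFne room
      have hseq : s = room e₁ := by rw [hsmin]; exact he₁
      obtain ⟨he₁E, hde₁⟩ := Finset.mem_filter.mp he₁F
      refine ⟨e₁, he₁E, Finset.mem_filter.mpr ⟨he₁E, hfrac e₁ he₁E⟩, ?_⟩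
      intro hmem
      obtain ⟨-, h0, h1⟩ := Finset.mem_filter.mp hmem
      by_cases hd : 0 < d e₁
      · have : W' e₁ = 1 := by
          simp only [hW', hseq, hroom, hd, if_true]; field_simp; ring
        rw [this] at h1; exact lt_irrefl _ h1
      · have hd' : d e₁ < 0 := lt_of_le_of_ne (not_lt.mp hd) hde₁
        have h9 : W e₁ / -d e₁ * d e₁ = -W e₁ := by
          rw [div_mul_eq_mul_div, div_eq_iff (neg_ne_zero.mpr hde₁)]; ring
        have : W' e₁ = 0 := by
          simp only [hW', hseq, hroom, hd, if_false, h9]; ring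
        rw [this] at h0; exact lt_irrefl _ h0
  refine ⟨W', hpack', htot, ?_⟩
  unfold meas
  rcases key with ⟨e₁, _, hein, henot⟩ | ⟨x₁, hxin, hxnot⟩
  · have hcard : (E.filter (fun e => 0 < W' e ∧ W' e < 1)).card
        < (E.filter (fun e => 0 < W e ∧ W e < 1)).card := by
      apply Finset.card_lt_card
      exact ⟨hfracsub, fun hsub => henot (hsub hein)⟩
    have h2 := unsat_card_le V E W'
    have h3 := Finset.card_le_card hunsatsub
    nlinarith [hcard, h2, unsat_card_le V E W]
  · have hcard : (V.filter (fun x => vertexWeight E W' x < 1)).card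
        < (V.filter (fun x => vertexWeight E W x < 1)).card := by
      apply Finset.card_lt_card
      exact ⟨hunsatsub, fun hsub => hxnot (hsub hxin)⟩
    have h3 := Finset.card_le_card hfracsub
    nlinarith [hcard, h3]

/-! ### Alternating walks -/

structure IsWalk (V : Finset α) (E : Finset (Finset α)) (W : Finset α → ℝ)
    (k : ℕ) (v : ℕ → α) (e : ℕ → Finset α) : Prop where
  hk : 1 ≤ k
  hunsat0 : vertexWeight E W (v 0) < 1
  he : ∀ i, i < k → e i ∈ E
  hmem1 : ∀ i, i < k → v i ∈ e i
  hmem2 : ∀ i, i < k → v (i+1) ∈ e i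
  hvne : ∀ i, i < k → v i ≠ v (i+1)
  hvV : ∀ i, i ≤ k → v i ∈ V
  hsat : ∀ i, 1 ≤ i → i < k → vertexWeight E W (v i) = 1
  hdist : ∀ i j, i < k → j < k → i ≠ j → v i ≠ v j
  hedist : ∀ i j, i < k → j < k → i ≠ j → e i ≠ e j

lemma vwD (E : Finset (Finset α)) {k : ℕ} {e : ℕ → Finset α}
    (he : ∀ i, i < k → e i ∈ E) (c : ℕ → ℝ) (u : α) :
    vertexWeight E (fun f => ∑ i ∈ Finset.range k, c i * (if e i = f then 1 else 0)) u
      = ∑ i ∈ Finset.range k, c i * (if u ∈ e i then 1 else 0) := by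
  unfold vertexWeight
  rw [Finset.sum_comm]
  apply Finset.sum_congr rfl
  intro i hi
  rw [← Finset.mul_sum, Finset.sum_ite_eq]
  congr 1
  by_cases hu : u ∈ e i
  · have : e i ∈ E.filter (fun f => u ∈ f) :=
      Finset.mem_filter.mpr ⟨he i (Finset.mem_range.mp hi), hu⟩
    simp [this, hu]
  · have : e i ∉ E.filter (fun f => u ∈ f) := by
      intro hmem; exact hu (Finset.mem_filter.mp hmem).2
    simp [this, hu]

lemma sumD (E : Finset (Finset α)) {k : ℕ} {e : ℕ → Finset α}
    (he : ∀ i, i < k → e i ∈ E) (c : ℕ → ℝ) :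
    ∑ f ∈ E, (∑ i ∈ Finset.range k, c i * (if e i = f then 1 else 0))
      = ∑ i ∈ Finset.range k, c i := by
  rw [Finset.sum_comm]
  apply Finset.sum_congr rfl
  intro i hi
  rw [← Finset.mul_sum, Finset.sum_ite_eq]
  simp [he i (Finset.mem_range.mp hi)]

lemma Dval (E : Finset (Finset α)) {k : ℕ} {e : ℕ → Finset α}
    (c : ℕ → ℝ) {i₀ : ℕ} (hi₀ : i₀ < k)
    (hed : ∀ i, i < k → i ≠ i₀ → e i ≠ e i₀) :
    (∑ i ∈ Finset.range k, c i * (if e i = e i₀ then 1 else 0)) = c i₀ := by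
  rw [Finset.sum_eq_single i₀]
  · simp
  · intro i hi hne
    have := hed i (Finset.mem_range.mp hi) hne
    simp [this]
  · intro h; exact absurd (Finset.mem_range.mpr hi₀) h

lemma ite_or_split (P Q : Prop) [Decidable P] [Decidable Q] (h : ¬(P ∧ Q)) :
    (if P ∨ Q then (1:ℝ) else 0) = (if P then 1 else 0) + (if Q then 1 else 0) := by
  by_cases hP : P <;> by_cases hQ : Q <;> simp_all

/-- Evaluation of the direction's vertex weight via the two endpoint sums. -/
lemma vwD_eval (V : Finset α) (E : Finset (Finset α)) (W : Finset α → ℝ)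
    (hE : ∀ f ∈ E, f ⊆ V ∧ f.card = 2)
    {k : ℕ} {v : ℕ → α} {e : ℕ → Finset α} (wk : IsWalk V E W k v e)
    (c : ℕ → ℝ) (u : α) :
    vertexWeight E (fun f => ∑ i ∈ Finset.range k, c i * (if e i = f then 1 else 0)) u
      = (∑ i ∈ Finset.range k, c i * (if u = v i then 1 else 0))
        + (∑ i ∈ Finset.range k, c i * (if u = v (i+1) then 1 else 0)) := by
  rw [vwD E wk.he c u, ← Finset.sum_add_distrib]
  apply Finset.sum_congr rfl
  intro i hi
  have hik := Finset.mem_range.mp hi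
  have hpair : e i = {v i, v (i+1)} :=
    pair_eq (hE _ (wk.he i hik)).2 (wk.hmem1 i hik) (wk.hmem2 i hik) (wk.hvne i hik)
  have : (if u ∈ e i then (1:ℝ) else 0)
      = (if u = v i then 1 else 0) + (if u = v (i+1) then 1 else 0) := by
    simp only [hpair, Finset.mem_insert, Finset.mem_singleton]
    apply ite_or_split
    rintro ⟨h1, h2⟩; exact wk.hvne i hik (h1 ▸ h2 ▸ rfl)
  rw [this, mul_add]

/-- What we need from a direction. -/
def GoodDir (V : Finset α) (E : Finset (Finset α)) (W : Finset α → ℝ)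
    (d : Finset α → ℝ) : Prop :=
  (∀ x ∈ V, vertexWeight E d x ≠ 0 → vertexWeight E W x < 1)
    ∧ (0 ≤ ∑ f ∈ E, d f) ∧ (∃ f ∈ E, d f ≠ 0)

lemma neg_one_pow_pred {m : ℕ} (hm : 1 ≤ m) :
    (-1 : ℝ)^m = -(-1)^(m-1) := by
  have h : m = (m-1)+1 := by omega
  conv_lhs => rw [h, pow_succ]
  ring

lemma finish_alpha (V : Finset α) (E : Finset (Finset α)) (W : Finset α → ℝ)
    (hE : ∀ f ∈ E, f ⊆ V ∧ f.card = 2) (hW : IsFracEdgePack V E W)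
    {k : ℕ} {v : ℕ → α} {e : ℕ → Finset α} (wk : IsWalk V E W k v e)
    (hhead : vertexWeight E W (v k) < 1) :
    ∃ d, GoodDir V E W d := by
  classical
  set c : ℕ → ℝ := fun i => (-1)^i with hc
  refine ⟨fun f => ∑ i ∈ Finset.range k, c i * (if e i = f then 1 else 0), ?_, ?_, ?_⟩
  · -- hpos
    intro x hx hdx
    by_contra hnot
    have hsatx : vertexWeight E W x = 1 := le_antisymm (hW.2 x hx) (not_lt.mp hnot)
    apply hdx
    rw [vwD_eval V E W hE wk]
    have hx0 : x ≠ v 0 := by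
      intro h; rw [h] at hsatx; linarith [wk.hunsat0]
    have hxk : x ≠ v k := by
      intro h; rw [h] at hsatx; linarith [hhead]
    by_cases hon : ∃ m, m < k ∧ x = v m
    · obtain ⟨m, hmk, hxm⟩ := hon
      have hm1 : 1 ≤ m := by
        rcases Nat.eq_zero_or_pos m with rfl|h; · exact absurd hxm hx0
        · exact h
      have hsum1 : (∑ i ∈ Finset.range k, c i * (if x = v i then 1 else 0)) = c m := by
        rw [Finset.sum_eq_single m]
        · simp [hxm]
        · intro i hi hne
          have : x ≠ v i := by
            rw [hxm]; exact wk.hdist m i hmk (Finset.mem_range.mp hi) (Ne.symm hne)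
          simp [this]
        · intro h; exact absurd (Finset.mem_range.mpr hmk) h
      have hsum2 : (∑ i ∈ Finset.range k, c i * (if x = v (i+1) then 1 else 0)) = c (m-1) := by
        rw [Finset.sum_eq_single (m-1)]
        · have : m - 1 + 1 = m := by omega
          simp [this, hxm]
        · intro i hi hne
          have hik := Finset.mem_range.mp hi
          have : x ≠ v (i+1) := by
            rcases Nat.lt_or_ge (i+1) k with h|h
            · rw [hxm]; exact wk.hdist m (i+1) hmk h (by omega)
            · have : i + 1 = k := by omega
              rw [this]; exact hxk
          simp [this]
        · intro h
          exact absurd (Finset.mem_range.mpr (by omega : m - 1 < k)) h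
      rw [hsum1, hsum2, hc]
      simp only
      rw [neg_one_pow_pred hm1]; ring
    · push_neg at hon
      have h1 : (∑ i ∈ Finset.range k, c i * (if x = v i then 1 else 0)) = 0 := by
        apply Finset.sum_eq_zero; intro i hi
        simp [hon i (Finset.mem_range.mp hi)]
      have h2 : (∑ i ∈ Finset.range k, c i * (if x = v (i+1) then 1 else 0)) = 0 := by
        apply Finset.sum_eq_zero; intro i hi
        have hik := Finset.mem_range.mp hi
        have : x ≠ v (i+1) := by
          rcases Nat.lt_or_ge (i+1) k with h|h
          · exact hon (i+1) h
          · have : i + 1 = k := by omega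
            rw [this]; exact hxk
        simp [this]
      rw [h1, h2, add_zero]
  · rw [sumD E wk.he]; exact altsum_nonneg k
  · refine ⟨e 0, wk.he 0 wk.hk, ?_⟩
    show (∑ i ∈ Finset.range k, c i * if e i = e 0 then 1 else 0) ≠ 0
    rw [Dval E c wk.hk (fun i hi hne => wk.hedist i 0 hi wk.hk hne)]
    simp [hc]

lemma finish_gamma (V : Finset α) (E : Finset (Finset α)) (W : Finset α → ℝ)
    (hE : ∀ f ∈ E, f ⊆ V ∧ f.card = 2) (hW : IsFracEdgePack V E W)
    {k : ℕ} {v : ℕ → α} {e : ℕ → Finset α} (wk : IsWalk V E W k v e)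
    (hhead : vertexWeight E W (v k) = 1)
    {j : ℕ} (hjk : j < k) (hvkj : v k = v j) :
    ∃ d, GoodDir V E W d := by
  classical
  have hj1 : 1 ≤ j := by
    rcases Nat.eq_zero_or_pos j with rfl|h
    · rw [hvkj] at hhead; linarith [wk.hunsat0]
    · exact h
  set a : ℝ := 1 + (-1)^(k-1-j) with ha
  set c : ℕ → ℝ := fun i => if i < j then a * (-1)^i else (-1)^i with hc
  refine ⟨fun f => ∑ i ∈ Finset.range k, c i * (if e i = f then 1 else 0), ?_, ?_, ?_⟩
  · -- hpos
    intro x hx hdx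
    by_contra hnot
    have hsatx : vertexWeight E W x = 1 := le_antisymm (hW.2 x hx) (not_lt.mp hnot)
    apply hdx
    rw [vwD_eval V E W hE wk]
    have hx0 : x ≠ v 0 := by
      intro h; rw [h] at hsatx; linarith [wk.hunsat0]
    by_cases hon : ∃ m, m < k ∧ x = v m
    · obtain ⟨m, hmk, hxm⟩ := hon
      have hm1 : 1 ≤ m := by
        rcases Nat.eq_zero_or_pos m with rfl|h; · exact absurd hxm hx0
        · exact h
      have hsum1 : (∑ i ∈ Finset.range k, c i * (if x = v i then 1 else 0)) = c m := by
        rw [Finset.sum_eq_single m]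
        · simp [hxm]
        · intro i hi hne
          have : x ≠ v i := by
            rw [hxm]; exact wk.hdist m i hmk (Finset.mem_range.mp hi) (Ne.symm hne)
          simp [this]
        · intro h; exact absurd (Finset.mem_range.mpr hmk) h
      by_cases hmj : m = j
      · -- x = v j : second sum has indices j-1 and k-1
        subst hmj
        have hxvk : x = v k := by rw [hvkj, ← hxm]
        have hsum2 : (∑ i ∈ Finset.range k, c i * (if x = v (i+1) then 1 else 0))
            = c (m-1) + c (k-1) := by
          have hsub : ({m-1, k-1} : Finset ℕ) ⊆ Finset.range k := by
            intro i hi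
            simp only [Finset.mem_insert, Finset.mem_singleton] at hi
            rcases hi with rfl|rfl <;> (apply Finset.mem_range.mpr; omega)
          rw [← Finset.sum_subset hsub]
          · have hne' : m - 1 ≠ k - 1 := by omega
            rw [Finset.sum_pair hne']
            have e1 : m - 1 + 1 = m := by omega
            have e2 : k - 1 + 1 = k := by omega
            rw [e1, e2]
            have t1 : (if x = v m then (1:ℝ) else 0) = 1 := if_pos hxm
            have t2 : (if x = v k then (1:ℝ) else 0) = 1 := if_pos hxvk
            rw [t1, t2, mul_one, mul_one]
          · intro i hi hni
            simp only [Finset.mem_insert, Finset.mem_singleton] at hni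
            push_neg at hni
            have hik := Finset.mem_range.mp hi
            have : x ≠ v (i+1) := by
              rcases Nat.lt_or_ge (i+1) k with h|h
              · rw [hxm]
                exact wk.hdist m (i+1) hmk h (by omega)
              · exact absurd (by omega : i = k - 1) hni.2
            simp [this]
        rw [hsum1, hsum2]
        have hjlt : ¬ (m < m) := lt_irrefl m
        have hjlt' : m - 1 < m := by omega
        have hklt : ¬ (k - 1 < m) := by omega
        simp only [hc, hjlt, hjlt', hklt, if_true, if_false]
        have hpow : (-1:ℝ)^(k-1) = (-1)^(k-1-m) * (-1)^m := by
          rw [← pow_add]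
          congr 1; omega
        have hpow2 : (-1:ℝ)^m = -(-1)^(m-1) := neg_one_pow_pred hm1
        rw [hpow, hpow2, ha]
        ring
      · -- m ≠ j : second sum only index m-1
        have hsum2 : (∑ i ∈ Finset.range k, c i * (if x = v (i+1) then 1 else 0))
            = c (m-1) := by
          rw [Finset.sum_eq_single (m-1)]
          · have : m - 1 + 1 = m := by omega
            simp [this, hxm]
          · intro i hi hne
            have hik := Finset.mem_range.mp hi
            have : x ≠ v (i+1) := by
              rcases Nat.lt_or_ge (i+1) k with h|h
              · rw [hxm]; exact wk.hdist m (i+1) hmk h (by omega)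
              · have hik' : i + 1 = k := by omega
                rw [hik', hvkj, hxm]
                exact wk.hdist m j hmk hjk hmj
            simp [this]
          · intro h
            exact absurd (Finset.mem_range.mpr (by omega : m - 1 < k)) h
        rw [hsum1, hsum2]
        rcases Nat.lt_or_ge m j with hmlt|hmge
        · have h1 : m - 1 < j := by omega
          simp only [hc, hmlt, h1, if_true]
          rw [neg_one_pow_pred hm1]; ring
        · have h1 : ¬ (m < j) := by omega
          have h2 : ¬ (m - 1 < j) := by omega
          simp only [hc, h1, h2, if_false]
          rw [neg_one_pow_pred hm1]; ring
    · push_neg at hon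
      have h1 : (∑ i ∈ Finset.range k, c i * (if x = v i then 1 else 0)) = 0 := by
        apply Finset.sum_eq_zero; intro i hi
        simp [hon i (Finset.mem_range.mp hi)]
      have h2 : (∑ i ∈ Finset.range k, c i * (if x = v (i+1) then 1 else 0)) = 0 := by
        apply Finset.sum_eq_zero; intro i hi
        have hik := Finset.mem_range.mp hi
        have : x ≠ v (i+1) := by
          rcases Nat.lt_or_ge (i+1) k with h|h
          · exact hon (i+1) h
          · have : i + 1 = k := by omega
            rw [this, hvkj]; exact hon j hjk
        simp [this]
      rw [h1, h2, add_zero]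
  · -- sum nonneg
    rw [sumD E wk.he]
    have hsplit : ∑ i ∈ Finset.range k, c i
        = (∑ i ∈ Finset.range j, c i) + (∑ i ∈ Finset.Ico j k, c i) :=
      (Finset.sum_range_add_sum_Ico c hjk.le).symm
    have hstem : (∑ i ∈ Finset.range j, c i) = a * ∑ i ∈ Finset.range j, (-1:ℝ)^i := by
      rw [Finset.mul_sum]
      apply Finset.sum_congr rfl
      intro i hi
      have : i < j := Finset.mem_range.mp hi
      simp [hc, this]
    have hcyc : (∑ i ∈ Finset.Ico j k, c i) = (-1:ℝ)^j * ∑ i ∈ Finset.range (k-j), (-1:ℝ)^i := by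
      rw [Finset.sum_Ico_eq_sum_range, Finset.mul_sum]
      apply Finset.sum_congr rfl
      intro i hi
      have : ¬ (j + i < j) := by omega
      simp [hc, this, pow_add]
    rw [hsplit, hstem, hcyc, altsum, altsum]
    have hmeq : k - 1 - j = (k - j) - 1 := by omega
    rw [ha, hmeq]
    by_cases hm : Even (k - j)
    · have hodd : ¬ Even ((k-j) - 1) := by
        rcases hm with ⟨t, ht⟩
        intro ⟨u, hu⟩; omega
      have : (-1:ℝ)^((k-j)-1) = -1 := Odd.neg_one_pow (Nat.odd_iff.mpr (Nat.not_even_iff.mp hodd))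
      simp [hm, this]
    · have heven : Even ((k-j) - 1) := by
        have := Nat.odd_iff.mpr (Nat.not_even_iff.mp hm)
        rcases this with ⟨t, ht⟩
        exact ⟨t, by omega⟩
      have h2 : (-1:ℝ)^((k-j)-1) = 1 := Even.neg_one_pow heven
      by_cases hj : Even j
      · have : (-1:ℝ)^j = 1 := Even.neg_one_pow hj
        simp [hm, hj, h2, this]
      · have : (-1:ℝ)^j = -1 :=
          Odd.neg_one_pow (Nat.odd_iff.mpr (Nat.not_even_iff.mp hj))
        simp [hm, hj, h2, this]
  · refine ⟨e j, wk.he j hjk, ?_⟩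
    show (∑ i ∈ Finset.range k, c i * if e i = e j then 1 else 0) ≠ 0
    rw [Dval E c hjk (fun i hi hne => wk.hedist i j hi hjk hne)]
    have : ¬ (j < j) := lt_irrefl j
    simp only [hc, this, if_false]
    exact pow_ne_zero _ (by norm_num)

/-- Extension of a walk at a saturated fresh head. -/
lemma extend_walk (V : Finset α) (E : Finset (Finset α)) (W : Finset α → ℝ)
    (hE : ∀ f ∈ E, f ⊆ V ∧ f.card = 2)
    (hfrac : ∀ f ∈ E, 0 < W f ∧ W f < 1)
    {k : ℕ} {v : ℕ → α} {e : ℕ → Finset α} (wk : IsWalk V E W k v e)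
    (hhead : vertexWeight E W (v k) = 1)
    (hfresh : ∀ m, m < k → v k ≠ v m) :
    ∃ v' e', IsWalk V E W (k+1) v' e' := by
  classical
  have hk1 : k - 1 < k := by have := wk.hk; omega
  have hk1' : k - 1 + 1 = k := by omega
  have hlast : v k ∈ e (k-1) := by
    have := wk.hmem2 (k-1) hk1
    rwa [hk1'] at this
  have hlastE := wk.he (k-1) hk1
  -- find a second edge at v k
  have hg : ∃ g ∈ E, v k ∈ g ∧ g ≠ e (k-1) := by
    by_contra hcon
    push_neg at hcon
    have hsub : E.filter (fun f => v k ∈ f) = {e (k-1)} := by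
      apply Finset.eq_singleton_iff_unique_mem.mpr
      constructor
      · exact Finset.mem_filter.mpr ⟨hlastE, hlast⟩
      · intro f hf
        obtain ⟨hfE, hvf⟩ := Finset.mem_filter.mp hf
        exact hcon f hfE hvf
    have : vertexWeight E W (v k) = W (e (k-1)) := by
      unfold vertexWeight; rw [hsub, Finset.sum_singleton]
    rw [hhead] at this
    linarith [(hfrac _ hlastE).2]
  obtain ⟨g, hgE, hvg, hgne⟩ := hg
  obtain ⟨b, hbg, hbne, hgpair⟩ := other_endpoint (hE g hgE).2 hvg
  refine ⟨fun m => if m = k+1 then b else v m, fun m => if m = k then g else e m, ?_⟩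
  constructor
  · omega
  · simp only [if_neg (by omega : (0:ℕ) ≠ k+1)]
    exact wk.hunsat0
  · intro i hi
    by_cases h : i = k
    · simp [h, hgE]
    · simp only [if_neg h]; exact wk.he i (by omega)
  · intro i hi
    by_cases h : i = k
    · simp only [if_pos h, if_neg (show i ≠ k+1 by omega)]
      rw [h]; exact hvg
    · simp only [if_neg h, if_neg (show i ≠ k+1 by omega)]
      exact wk.hmem1 i (by omega)
  · intro i hi
    by_cases h : i = k
    · simp only [if_pos h, if_pos (show i + 1 = k+1 by omega)]
      exact hbg
    · simp only [if_neg h, if_neg (show i+1 ≠ k+1 by omega)]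
      exact wk.hmem2 i (by omega)
  · intro i hi
    by_cases h : i = k
    · simp only [if_neg (show i ≠ k+1 by omega), if_pos (show i + 1 = k+1 by omega)]
      rw [h]
      exact fun hh => hbne (hh.symm)
    · simp only [if_neg (show i ≠ k+1 by omega), if_neg (show i+1 ≠ k+1 by omega)]
      exact wk.hvne i (by omega)
  · intro i hi
    by_cases h : i = k+1
    · simp only [if_pos h]
      exact (hE g hgE).1 hbg
    · simp only [if_neg h]
      exact wk.hvV i (by omega)
  · intro i h1 hi
    by_cases h : i = k
    · simp only [if_neg (show i ≠ k+1 by omega)]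
      rw [h]; exact hhead
    · simp only [if_neg (show i ≠ k+1 by omega)]
      exact wk.hsat i h1 (by omega)
  · intro i j hi hj hne
    by_cases hik : i = k <;> by_cases hjk : j = k
    · omega
    · simp only [if_neg (show i ≠ k+1 by omega), if_neg (show j ≠ k+1 by omega)]
      rw [hik]
      exact hfresh j (by omega)
    · simp only [if_neg (show i ≠ k+1 by omega), if_neg (show j ≠ k+1 by omega)]
      rw [hjk]
      exact fun hh => hfresh i (by omega) hh.symm
    · simp only [if_neg (show i ≠ k+1 by omega), if_neg (show j ≠ k+1 by omega)]
      exact wk.hdist i j (by omega) (by omega) hne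
  · intro i j hi hj hne
    have key : ∀ i, i < k → e i ≠ g := by
      intro i hik heq
      have hvk : v k ∈ e i := heq ▸ hvg
      have hpair : e i = {v i, v (i+1)} :=
        pair_eq (hE _ (wk.he i hik)).2 (wk.hmem1 i hik) (wk.hmem2 i hik) (wk.hvne i hik)
      rw [hpair] at hvk
      simp only [Finset.mem_insert, Finset.mem_singleton] at hvk
      rcases hvk with h|h
      · exact hfresh i hik h
      · rcases Nat.lt_or_ge (i+1) k with hlt|hge
        · exact hfresh (i+1) hlt h
        · have : i = k - 1 := by omega
          subst this
          exact hgne heq.symm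
    by_cases hik : i = k <;> by_cases hjk : j = k
    · omega
    · simp only [if_pos hik, if_neg hjk]
      exact fun hh => key j (by omega) hh.symm
    · simp only [if_pos hjk, if_neg hik]
      exact key i (by omega)
    · simp only [if_neg hik, if_neg hjk]
      exact wk.hedist i j (by omega) (by omega) hne

lemma build_aux (V : Finset α) (E : Finset (Finset α)) (W : Finset α → ℝ)
    (hE : ∀ f ∈ E, f ⊆ V ∧ f.card = 2) (hW : IsFracEdgePack V E W)
    (hfrac : ∀ f ∈ E, 0 < W f ∧ W f < 1) :
    ∀ n k (v : ℕ → α) (e : ℕ → Finset α), IsWalk V E W k v e → V.card < k + n →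
      ∃ d, GoodDir V E W d := by
  intro n
  induction n with
  | zero =>
      intro k v e wk hcard
      exfalso
      have hinj : Set.InjOn v ((Finset.range k) : Finset ℕ) := by
        intro i hi j hj hij
        by_contra hne
        exact wk.hdist i j (by simpa using hi) (by simpa using hj) hne hij
      have hmaps : ∀ i ∈ Finset.range k, v i ∈ V := by
        intro i hi
        exact wk.hvV i (le_of_lt (Finset.mem_range.mp hi))
      have := Finset.card_le_card_of_injOn v hmaps hinj
      simp only [Finset.card_range] at this
      omega
  | succ n ih =>
      intro k v e wk hcard
      by_cases hhead : vertexWeight E W (v k) < 1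
      · exact finish_alpha V E W hE hW wk hhead
      · have hsat : vertexWeight E W (v k) = 1 :=
          le_antisymm (hW.2 (v k) (wk.hvV k le_rfl)) (not_lt.mp hhead)
        by_cases hfresh : ∀ m, m < k → v k ≠ v m
        · obtain ⟨v', e', wk'⟩ := extend_walk V E W hE hfrac wk hsat hfresh
          exact ih (k+1) v' e' wk' (by omega)
        · push_neg at hfresh
          obtain ⟨j, hjk, hvkj⟩ := hfresh
          exact finish_gamma V E W hE hW wk hsat hjk hvkj

/-- Case D: from a deficient vertex in an all-fractional packing we obtain an
improving perturbation. -/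
lemma caseD (V : Finset α) (E : Finset (Finset α)) (W : Finset α → ℝ)
    (hE : ∀ f ∈ E, f ⊆ V ∧ f.card = 2) (hW : IsFracEdgePack V E W)
    (hfrac : ∀ f ∈ E, 0 < W f ∧ W f < 1)
    {x : α} (hx : x ∈ V) (hxu : vertexWeight E W x < 1)
    {e₀ : Finset α} (he₀ : e₀ ∈ E) (hxe₀ : x ∈ e₀) :
    ∃ W' : Finset α → ℝ, IsFracEdgePack V E W' ∧
      (∑ f ∈ E, W f) ≤ (∑ f ∈ E, W' f) ∧ meas V E W' < meas V E W := by
  classical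
  obtain ⟨b, hbe, hbne, hpair⟩ := other_endpoint (hE e₀ he₀).2 hxe₀
  set v : ℕ → α := fun m => if m = 0 then x else b with hv
  set e : ℕ → Finset α := fun _ => e₀ with he
  have wk : IsWalk V E W 1 v e := by
    constructor
    · exact le_rfl
    · simpa [hv] using hxu
    · intro i hi; simpa [he] using he₀
    · intro i hi
      interval_cases i
      simpa [hv, he] using hxe₀
    · intro i hi
      interval_cases i
      simpa [hv, he] using hbe
    · intro i hi
      interval_cases i
      simp only [hv, if_pos rfl, if_neg (by omega : (1:ℕ) ≠ 0)]
      exact fun hh => hbne hh.symm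
    · intro i hi
      interval_cases i
      · simpa [hv] using hx
      · simp only [hv, if_neg (by omega : (1:ℕ) ≠ 0)]
        exact (hE e₀ he₀).1 hbe
    · intro i h1 hi; omega
    · intro i j hi hj hne; omega
    · intro i j hi hj hne; omega
  obtain ⟨d, hd⟩ := build_aux V E W hE hW hfrac (V.card + 1) 1 v e wk (by omega)
  exact perturb V E W hW d hfrac hd.1 hd.2.1 hd.2.2

lemma vw_congr (E : Finset (Finset α)) (W₁ W₂ : Finset α → ℝ)
    (h : ∀ f ∈ E, W₁ f = W₂ f) (x : α) :
    vertexWeight E W₁ x = vertexWeight E W₂ x := by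
  unfold vertexWeight
  exact Finset.sum_congr rfl (fun f hf => h f (Finset.mem_filter.mp hf).1)

lemma vw_erase (E : Finset (Finset α)) (W : Finset α → ℝ) {f : Finset α} (hf : f ∈ E)
    (x : α) :
    vertexWeight (E.erase f) W x
      = vertexWeight E W x - (if x ∈ f then W f else 0) := by
  unfold vertexWeight
  rw [Finset.filter_erase]
  by_cases hx : x ∈ f
  · have hmem : f ∈ E.filter (fun g => x ∈ g) := Finset.mem_filter.mpr ⟨hf, hx⟩
    rw [if_pos hx, eq_sub_iff_add_eq, Finset.sum_erase_add _ _ hmem]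
  · rw [if_neg hx, sub_zero, Finset.erase_eq_of_notMem]
    intro hmem
    exact hx (Finset.mem_filter.mp hmem).2

lemma nice_dominates (V : Finset α) :
    ∀ (N : ℕ) (E : Finset (Finset α)), E.card ≤ N →
      (∀ f ∈ E, f ⊆ V ∧ f.card = 2) →
      ∀ (m : ℕ) (W : Finset α → ℝ), meas V E W ≤ m → IsFracEdgePack V E W →
        ∃ W', IsFracEdgePack V E W' ∧ (∑ f ∈ E, W f) ≤ (∑ f ∈ E, W' f) ∧
          ∀ x ∈ V, vertexWeight E W' x = 0 ∨ vertexWeight E W' x = 1 := by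
  intro N
  induction N with
  | zero =>
      intro E hcard hE m W hm hW
      have hEempty : E = ∅ := Finset.card_eq_zero.mp (Nat.le_zero.mp hcard)
      subst hEempty
      refine ⟨W, hW, le_rfl, ?_⟩
      intro x hx
      left
      unfold vertexWeight
      simp
  | succ N ihN =>
      intro E hcard hE m W
      induction m generalizing W with
      | zero =>
          intro hm hW
          by_cases hnice : ∀ x ∈ V, vertexWeight E W x = 0 ∨ vertexWeight E W x = 1
          · exact ⟨W, hW, le_rfl, hnice⟩
          · exfalso
            push_neg at hnice
            obtain ⟨x, hxV, hx0, hx1⟩ := hnice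
            have hxlt : vertexWeight E W x < 1 := lt_of_le_of_ne (hW.2 x hxV) hx1
            have : x ∈ V.filter (fun y => vertexWeight E W y < 1) :=
              Finset.mem_filter.mpr ⟨hxV, hxlt⟩
            have h1 : 1 ≤ (V.filter (fun y => vertexWeight E W y < 1)).card :=
              Finset.card_pos.mpr ⟨x, this⟩
            have : 1 ≤ meas V E W := by
              unfold meas; omega
            omega
      | succ m ihm =>
          intro hm hW
          by_cases hnice : ∀ x ∈ V, vertexWeight E W x = 0 ∨ vertexWeight E W x = 1
          · exact ⟨W, hW, le_rfl, hnice⟩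
          push_neg at hnice
          obtain ⟨x, hxV, hx0, hx1⟩ := hnice
          have hxlt : vertexWeight E W x < 1 := lt_of_le_of_ne (hW.2 x hxV) hx1
          have hxpos : 0 < vertexWeight E W x :=
            lt_of_le_of_ne (vw_nonneg E W (fun f hf => (hW.1 f hf).1) x) (Ne.symm hx0)
          by_cases hzero : ∃ f ∈ E, W f = 0
          · -- Case A : remove a zero edge
            obtain ⟨f, hfE, hf0⟩ := hzero
            set E' := E.erase f with hE'
            have hcard' : E'.card ≤ N := by
              rw [hE', Finset.card_erase_of_mem hfE]
              omega
            have hEsub : ∀ g ∈ E', g ⊆ V ∧ g.card = 2 :=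
              fun g hg => hE g (Finset.mem_of_mem_erase hg)
            have hvwE' : ∀ y, vertexWeight E' W y = vertexWeight E W y := by
              intro y
              rw [hE', vw_erase E W hfE, hf0]
              simp
            have hW' : IsFracEdgePack V E' W := by
              constructor
              · intro g hg; exact hW.1 g (Finset.mem_of_mem_erase hg)
              · intro y hy; rw [hvwE']; exact hW.2 y hy
            obtain ⟨W₁, hW₁pack, hW₁tot, hW₁nice⟩ :=
              ihN E' hcard' hEsub (meas V E' W) W le_rfl hW'
            set W₂ := Function.update W₁ f (0:ℝ) with hW₂
            have hW₂off : ∀ g ∈ E', W₂ g = W₁ g := by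
              intro g hg
              rw [hW₂, Function.update_of_ne (Finset.ne_of_mem_erase hg)]
            have hz : W₂ f = 0 := Function.update_self f 0 W₁
            have hvwW₂ : ∀ y, vertexWeight E W₂ y = vertexWeight E' W₁ y := by
              intro y
              have h1 := vw_erase E W₂ hfE y
              rw [← hE'] at h1
              have h1' : vertexWeight E' W₂ y = vertexWeight E W₂ y := by
                rw [h1, hz]; simp
              rw [← h1', vw_congr E' W₂ W₁ hW₂off y]
            refine ⟨W₂, ⟨?_, ?_⟩, ?_, ?_⟩
            · intro g hg
              by_cases hgf : g = f
              · rw [hgf, hW₂, Function.update_self]; norm_num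
              · rw [hW₂, Function.update_of_ne hgf]
                exact hW₁pack.1 g (Finset.mem_erase.mpr ⟨hgf, hg⟩)
            · intro y hy; rw [hvwW₂ y]; exact hW₁pack.2 y hy
            · have hsum2 : ∑ g ∈ E, W₂ g = (∑ g ∈ E', W₂ g) + W₂ f := by
                rw [hE', Finset.sum_erase_add E W₂ hfE]
              have hoffsum : ∑ g ∈ E', W₂ g = ∑ g ∈ E', W₁ g :=
                Finset.sum_congr rfl (fun g hg => hW₂off g hg)
              have hsumW : ∑ g ∈ E, W g = (∑ g ∈ E', W g) + W f := by
                rw [hE', Finset.sum_erase_add E W hfE]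
              rw [hsum2, hz, hoffsum, hsumW, hf0, add_zero, add_zero]
              exact hW₁tot
            · intro y hy; rw [hvwW₂ y]; exact hW₁nice y hy
          · by_cases hone : ∃ f ∈ E, W f = 1
            · -- Case B : remove a full edge
              obtain ⟨f, hfE, hf1⟩ := hone
              set E' := E.erase f with hE'
              have hcard' : E'.card ≤ N := by
                rw [hE', Finset.card_erase_of_mem hfE]; omega
              have hEsub : ∀ g ∈ E', g ⊆ V ∧ g.card = 2 :=
                fun g hg => hE g (Finset.mem_of_mem_erase hg)
              -- no other edge meets f
              have hiso : ∀ g ∈ E', ∀ y ∈ f, y ∉ g := by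
                intro g hg y hyf hyg
                obtain ⟨hgne, hgE⟩ := Finset.mem_erase.mp hg
                have hyV : y ∈ V := (hE f hfE).1 hyf
                have hWgpos : 0 < W g := by
                  rcases (hW.1 g hgE).1.lt_or_eq with h|h
                  · exact h
                  · exact absurd h.symm (fun hh => hzero ⟨g, hgE, hh⟩)
                have hsub2 : ({f, g} : Finset (Finset α)) ⊆ E.filter (fun s => y ∈ s) := by
                  intro s hs
                  simp only [Finset.mem_insert, Finset.mem_singleton] at hs
                  rcases hs with rfl|rfl
                  · exact Finset.mem_filter.mpr ⟨hfE, hyf⟩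
                  · exact Finset.mem_filter.mpr ⟨hgE, hyg⟩
                have := Finset.sum_le_sum_of_subset_of_nonneg hsub2
                  (fun s hs _ => (hW.1 s (Finset.mem_filter.mp hs).1).1)
                rw [Finset.sum_pair (fun hh => hgne hh.symm)] at this
                have hvwle := hW.2 y hyV
                unfold vertexWeight at hvwle
                rw [hf1] at this
                linarith
              have hW' : IsFracEdgePack V E' W := by
                constructor
                · intro g hg; exact hW.1 g (Finset.mem_of_mem_erase hg)
                · intro y hy
                  have := vw_erase E W hfE y
                  rw [← hE'] at this
                  rw [this]
                  have h2 := hW.2 y hy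
                  have h0 : (0:ℝ) ≤ (if y ∈ f then W f else 0) := by
                    split
                    · rw [hf1]; norm_num
                    · exact le_rfl
                  linarith
              obtain ⟨W₁, hW₁pack, hW₁tot, hW₁nice⟩ :=
                ihN E' hcard' hEsub (meas V E' W) W le_rfl hW'
              set W₂ := Function.update W₁ f (1:ℝ) with hW₂
              have hW₂off : ∀ g ∈ E', W₂ g = W₁ g := by
                intro g hg
                rw [hW₂, Function.update_of_ne (Finset.ne_of_mem_erase hg)]
              have hz : W₂ f = 1 := Function.update_self f 1 W₁
              have hvwW₂ : ∀ y, vertexWeight E W₂ y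
                  = vertexWeight E' W₁ y + (if y ∈ f then 1 else 0) := by
                intro y
                have h1 := vw_erase E W₂ hfE y
                rw [← hE'] at h1
                have h1' : vertexWeight E' W₂ y = vertexWeight E' W₁ y :=
                  vw_congr E' W₂ W₁ hW₂off y
                rw [h1', hz] at h1
                linarith [h1]
              -- vertex weight of W₁ vanishes on f
              have hvwzero : ∀ y ∈ f, vertexWeight E' W₁ y = 0 := by
                intro y hyf
                unfold vertexWeight
                apply Finset.sum_eq_zero
                intro g hg
                obtain ⟨hgE', hyg⟩ := Finset.mem_filter.mp hg
                exact absurd hyg (hiso g hgE' y hyf)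
              refine ⟨W₂, ⟨?_, ?_⟩, ?_, ?_⟩
              · intro g hg
                by_cases hgf : g = f
                · rw [hgf, hW₂, Function.update_self]; norm_num
                · rw [hW₂, Function.update_of_ne hgf]
                  exact hW₁pack.1 g (Finset.mem_erase.mpr ⟨hgf, hg⟩)
              · intro y hy
                rw [hvwW₂ y]
                by_cases hyf : y ∈ f
                · rw [if_pos hyf, hvwzero y hyf]; norm_num
                · rw [if_neg hyf, add_zero]
                  exact hW₁pack.2 y hy
              · have hsum2 : ∑ g ∈ E, W₂ g = (∑ g ∈ E', W₂ g) + W₂ f := by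
                  rw [hE', Finset.sum_erase_add E W₂ hfE]
                have hoffsum : ∑ g ∈ E', W₂ g = ∑ g ∈ E', W₁ g :=
                  Finset.sum_congr rfl (fun g hg => hW₂off g hg)
                have hsumW : ∑ g ∈ E, W g = (∑ g ∈ E', W g) + W f := by
                  rw [hE', Finset.sum_erase_add E W hfE]
                rw [hsum2, hz, hoffsum, hsumW, hf1]
                linarith [hW₁tot]
              · intro y hy
                rw [hvwW₂ y]
                by_cases hyf : y ∈ f
                · rw [if_pos hyf, hvwzero y hyf]; right; norm_num
                · rw [if_neg hyf, add_zero]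
                  exact hW₁nice y hy
            · -- Case D : all edges fractional, improve by a walk
              push_neg at hzero hone
              have hfrac : ∀ f ∈ E, 0 < W f ∧ W f < 1 := by
                intro f hf
                obtain ⟨h0, h1⟩ := hW.1 f hf
                exact ⟨lt_of_le_of_ne h0 (fun hh => hzero f hf hh.symm),
                  lt_of_le_of_ne h1 (hone f hf)⟩
              have hfilterne : (E.filter (fun f => x ∈ f)).Nonempty := by
                by_contra hcon
                rw [Finset.not_nonempty_iff_eq_empty] at hcon
                have : vertexWeight E W x = 0 := by
                  unfold vertexWeight; rw [hcon]; simp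
                linarith
              obtain ⟨e₀, he₀⟩ := hfilterne
              obtain ⟨he₀E, hxe₀⟩ := Finset.mem_filter.mp he₀
              obtain ⟨W', hW'pack, hW'tot, hW'meas⟩ :=
                caseD V E W hE hW hfrac hxV hxlt he₀E hxe₀
              obtain ⟨W'', hp, ht, hn⟩ := ihm W' (by omega) hW'pack
              exact ⟨W'', hp, le_trans hW'tot ht, hn⟩

/-- From any `[0,1]`-weighting we can extract a packing losing at most the excesses. -/
lemma reduce (V : Finset α) (E : Finset (Finset α))
    (hE : ∀ f ∈ E, f ⊆ V ∧ f.card = 2) :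
    ∀ (μ : ℕ) (W : Finset α → ℝ), (∀ f ∈ E, 0 ≤ W f ∧ W f ≤ 1) →
      (E.filter (fun f => 0 < W f)).card
        + (V.filter (fun y => 1 < vertexWeight E W y)).card ≤ μ →
      ∃ P, IsFracEdgePack V E P ∧
        (∑ f ∈ E, W f) - (∑ y ∈ V, max (vertexWeight E W y - 1) 0) ≤ ∑ f ∈ E, P f := by
  intro μ
  induction μ with
  | zero =>
      intro W hb hμ
      have hover : ∀ y ∈ V, vertexWeight E W y ≤ 1 := by
        intro y hy
        by_contra hcon
        have : y ∈ V.filter (fun y => 1 < vertexWeight E W y) :=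
          Finset.mem_filter.mpr ⟨hy, not_le.mp hcon⟩
        have := Finset.card_pos.mpr ⟨y, this⟩
        omega
      refine ⟨W, ⟨hb, hover⟩, ?_⟩
      have : 0 ≤ ∑ y ∈ V, max (vertexWeight E W y - 1) 0 :=
        Finset.sum_nonneg (fun y _ => le_max_right _ _)
      linarith
  | succ μ ih =>
      intro W hb hμ
      by_cases hover : ∀ y ∈ V, vertexWeight E W y ≤ 1
      · refine ⟨W, ⟨hb, hover⟩, ?_⟩
        have : 0 ≤ ∑ y ∈ V, max (vertexWeight E W y - 1) 0 :=
          Finset.sum_nonneg (fun y _ => le_max_right _ _)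
        linarith
      · push_neg at hover
        obtain ⟨y, hyV, hy1⟩ := hover
        have hsumpos : 0 < vertexWeight E W y := by linarith
        obtain ⟨f, hff, hf0⟩ :=
          Finset.exists_ne_zero_of_sum_ne_zero
            (show (∑ g ∈ E.filter (fun g => y ∈ g), W g) ≠ 0 from ne_of_gt hsumpos)
        obtain ⟨hfE, hyf⟩ := Finset.mem_filter.mp hff
        have hfpos : 0 < W f := lt_of_le_of_ne (hb f hfE).1 (Ne.symm hf0)
        set δ := min (W f) (vertexWeight E W y - 1) with hδ
        have hδpos : 0 < δ := lt_min hfpos (by linarith)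
        have hδf : δ ≤ W f := min_le_left _ _
        have hδy : δ ≤ vertexWeight E W y - 1 := min_le_right _ _
        set W₂ := Function.update W f (W f - δ) with hW₂
        have hb₂ : ∀ g ∈ E, 0 ≤ W₂ g ∧ W₂ g ≤ 1 := by
          intro g hg
          by_cases hgf : g = f
          · rw [hgf, hW₂, Function.update_self]
            constructor
            · linarith
            · linarith [(hb f hfE).2]
          · rw [hW₂, Function.update_of_ne hgf]; exact hb g hg
        have hvw₂ : ∀ z, vertexWeight E W₂ z
            = if z ∈ f then vertexWeight E W z - δ else vertexWeight E W z := by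
          intro z
          rw [hW₂, vw_update E W hfE]
          split <;> ring_nf
        have hsum₂ : ∑ g ∈ E, W₂ g = (∑ g ∈ E, W g) - δ := by
          rw [hW₂, sum_update E W hfE]; ring
        -- measure decreases
        have hpossub : E.filter (fun g => 0 < W₂ g) ⊆ E.filter (fun g => 0 < W g) := by
          intro g hg
          obtain ⟨hgE, hgpos⟩ := Finset.mem_filter.mp hg
          refine Finset.mem_filter.mpr ⟨hgE, ?_⟩
          by_cases hgf : g = f
          · rw [hgf]; exact hfpos
          · rw [hW₂, Function.update_of_ne hgf] at hgpos; exact hgpos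
        have hoversub : V.filter (fun z => 1 < vertexWeight E W₂ z)
            ⊆ V.filter (fun z => 1 < vertexWeight E W z) := by
          intro z hz
          obtain ⟨hzV, hzo⟩ := Finset.mem_filter.mp hz
          refine Finset.mem_filter.mpr ⟨hzV, ?_⟩
          rw [hvw₂ z] at hzo
          split at hzo
          · linarith
          · exact hzo
        have hmeas : (E.filter (fun g => 0 < W₂ g)).card
            + (V.filter (fun z => 1 < vertexWeight E W₂ z)).card ≤ μ := by
          rcases min_cases (W f) (vertexWeight E W y - 1) with ⟨heq, _⟩|⟨heq, _⟩
          · -- δ = W f : f leaves the positive edges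
            have hfnot : f ∉ E.filter (fun g => 0 < W₂ g) := by
              intro hmem
              have := (Finset.mem_filter.mp hmem).2
              rw [hW₂, Function.update_self, hδ, heq] at this
              linarith
            have hstrict : (E.filter (fun g => 0 < W₂ g)).card
                < (E.filter (fun g => 0 < W g)).card := by
              apply Finset.card_lt_card
              refine ⟨hpossub, fun hsub => hfnot (hsub (Finset.mem_filter.mpr ⟨hfE, hfpos⟩))⟩
            have := Finset.card_le_card hoversub
            omega
          · -- δ = excess at y : y leaves the overfull vertices
            have hynot : y ∉ V.filter (fun z => 1 < vertexWeight E W₂ z) := by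
              intro hmem
              have := (Finset.mem_filter.mp hmem).2
              rw [hvw₂ y, if_pos hyf, hδ, heq] at this
              linarith
            have hstrict : (V.filter (fun z => 1 < vertexWeight E W₂ z)).card
                < (V.filter (fun z => 1 < vertexWeight E W z)).card := by
              apply Finset.card_lt_card
              refine ⟨hoversub, fun hsub => hynot (hsub (Finset.mem_filter.mpr ⟨hyV, hy1⟩))⟩
            have := Finset.card_le_card hpossub
            omega
        obtain ⟨P, hP, hPtot⟩ := ih W₂ hb₂ hmeas
        refine ⟨P, hP, ?_⟩
        -- excess sum decreases by at least δ
        have hexc : ∑ z ∈ V, max (vertexWeight E W₂ z - 1) 0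
            ≤ (∑ z ∈ V, max (vertexWeight E W z - 1) 0) - δ := by
          have hpt : ∀ z ∈ V, max (vertexWeight E W₂ z - 1) 0
              ≤ max (vertexWeight E W z - 1) 0 - (if z = y then δ else 0) := by
            intro z hzV
            by_cases hzy : z = y
            · rw [hzy, if_pos rfl, hvw₂ y, if_pos hyf]
              rw [max_eq_left (by linarith), max_eq_left (by linarith)]
              linarith
            · rw [if_neg hzy, sub_zero]
              rw [hvw₂ z]
              split
              · apply max_le_max _ le_rfl; linarith
              · exact le_rfl
          calc ∑ z ∈ V, max (vertexWeight E W₂ z - 1) 0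
              ≤ ∑ z ∈ V, (max (vertexWeight E W z - 1) 0 - (if z = y then δ else 0)) :=
                Finset.sum_le_sum hpt
            _ = (∑ z ∈ V, max (vertexWeight E W z - 1) 0) - δ := by
                rw [Finset.sum_sub_distrib, Finset.sum_ite_eq' V y (fun _ => δ), if_pos hyV]
        rw [hsum₂] at hPtot
        linarith

lemma nice_count (V : Finset α) (E : Finset (Finset α))
    (hE : ∀ f ∈ E, f ⊆ V ∧ f.card = 2) (W : Finset α → ℝ)
    (hnice : ∀ x ∈ V, vertexWeight E W x = 0 ∨ vertexWeight E W x = 1) :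
    2 * (∑ e ∈ E, W e) = ((V.filter (fun x => vertexWeight E W x = 1)).card : ℝ) := by
  rw [← handshake V E hE W]
  rw [← Finset.sum_filter_add_sum_filter_not V (fun x => vertexWeight E W x = 1)]
  have h1 : ∑ x ∈ V.filter (fun x => vertexWeight E W x = 1), vertexWeight E W x
      = ((V.filter (fun x => vertexWeight E W x = 1)).card : ℝ) := by
    rw [Finset.sum_congr rfl (fun x hx => (Finset.mem_filter.mp hx).2), Finset.sum_const]
    simp
  have h2 : ∑ x ∈ V.filter (fun x => ¬ vertexWeight E W x = 1), vertexWeight E W x = 0 := by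
    apply Finset.sum_eq_zero
    intro x hx
    obtain ⟨hxV, hx1⟩ := Finset.mem_filter.mp hx
    rcases hnice x hxV with h|h
    · exact h
    · exact absurd h hx1
  rw [h1, h2, add_zero]

lemma nice_split (V : Finset α) (E : Finset (Finset α)) (W : Finset α → ℝ)
    (hnice : ∀ x ∈ V, vertexWeight E W x = 0 ∨ vertexWeight E W x = 1) :
    (V.filter (fun x => vertexWeight E W x = 0)).card
      + (V.filter (fun x => vertexWeight E W x = 1)).card = V.card := by
  have h := Finset.card_filter_add_card_filter_not
    (s := V) (p := fun x => vertexWeight E W x = 0)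
  have h2 : V.filter (fun a => ¬ vertexWeight E W a = 0)
      = V.filter (fun x => vertexWeight E W x = 1) := by
    apply Finset.filter_congr
    intro x hxV
    rcases hnice x hxV with hh|hh <;> simp [hh]
  rw [← h, h2]

/-- A binary hypergraph `G = (V, E)` in which every vertex
is incident to at least one edge admits a fractional edge packing `W` of
total weight `τ(G)` such that (1) every vertex has weight 0 or 1 under `W`,
and (2) `ρ(G) − τ(G) = |Z|`, where `Z` is the set of vertices of weight 0. -/
theorem exists_nice_packing (V : Finset α) (E : Finset (Finset α))
    (hG : BinaryHG V E) :
    ∃ W : Finset α → ℝ,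
      IsFracEdgePack V E W ∧
      (∑ e ∈ E, W e) = tau V E ∧
      (∀ X ∈ V, vertexWeight E W X = 0 ∨ vertexWeight E W X = 1) ∧
      rho V E - tau V E
        = ((V.filter fun X => vertexWeight E W X = 0).card : ℝ) := by
  classical
  obtain ⟨hE, hinc⟩ := hG
  -- the zero packing is nice
  have hvw0 : ∀ x, vertexWeight E (fun _ => (0:ℝ)) x = 0 := by
    intro x; unfold vertexWeight; simp
  have hzero : IsFracEdgePack V E (fun _ => (0:ℝ)) :=
    ⟨fun e _ => by norm_num, fun x _ => by rw [hvw0]; norm_num⟩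
  set K := (Finset.range (V.card + 1)).filter
    (fun k : ℕ => ∃ W : Finset α → ℝ, IsFracEdgePack V E W ∧
      (∀ x ∈ V, vertexWeight E W x = 0 ∨ vertexWeight E W x = 1) ∧
      (∑ e ∈ E, W e) = (k:ℝ)/2) with hK
  have hK0 : 0 ∈ K := by
    rw [hK]
    refine Finset.mem_filter.mpr ⟨Finset.mem_range.mpr (by omega), ?_⟩
    exact ⟨fun _ => 0, hzero, fun x hx => Or.inl (hvw0 x), by simp⟩
  set k₀ := K.max' ⟨0, hK0⟩ with hk₀
  obtain ⟨-, W₀, hW₀pack, hW₀nice, hW₀tot⟩ := Finset.mem_filter.mp (K.max'_mem ⟨0, hK0⟩)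
  -- every packing total is at most k₀/2
  have hbound : ∀ W : Finset α → ℝ, IsFracEdgePack V E W →
      (∑ e ∈ E, W e) ≤ (k₀:ℝ)/2 := by
    intro W hW
    obtain ⟨W', hW'pack, hW'tot, hW'nice⟩ :=
      nice_dominates V E.card E le_rfl hE (meas V E W) W le_rfl hW
    set k' := (V.filter (fun x => vertexWeight E W' x = 1)).card with hk'
    have hcount := nice_count V E hE W' hW'nice
    have hk'mem : k' ∈ K := by
      rw [hK]
      refine Finset.mem_filter.mpr ⟨Finset.mem_range.mpr ?_, ?_⟩
      · have := Finset.card_le_card (Finset.filter_subset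
          (fun x => vertexWeight E W' x = 1) V)
        omega
      · exact ⟨W', hW'pack, hW'nice, by rw [← hk'] at hcount; linarith⟩
    have hk'le : k' ≤ k₀ := Finset.le_max' K k' hk'mem
    have : (k':ℝ) ≤ (k₀:ℝ) := Nat.cast_le.mpr hk'le
    rw [← hk'] at hcount
    linarith
  -- tau equals k₀/2
  have htauset : (∑ e ∈ E, W₀ e) ∈
      {t | ∃ W : Finset α → ℝ, IsFracEdgePack V E W ∧ t = ∑ e ∈ E, W e} :=
    ⟨W₀, hW₀pack, rfl⟩
  have htau : tau V E = (k₀:ℝ)/2 := by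
    unfold tau
    apply le_antisymm
    · apply csSup_le ⟨_, htauset⟩
      rintro t ⟨W, hW, rfl⟩
      exact hbound W hW
    · rw [← hW₀tot]
      apply le_csSup ⟨(k₀:ℝ)/2, ?_⟩ htauset
      rintro t ⟨W, hW, rfl⟩
      exact hbound W hW
  -- cardinality of Z
  have hsplit := nice_split V E W₀ hW₀nice
  have hcount₀ := nice_count V E hE W₀ hW₀nice
  have hcard1 : ((V.filter (fun x => vertexWeight E W₀ x = 1)).card : ℝ) = (k₀:ℝ) := by
    rw [← hcount₀, hW₀tot]; ring
  have hcardZ : ((V.filter (fun x => vertexWeight E W₀ x = 0)).card : ℝ)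
      = (V.card : ℝ) - (k₀:ℝ) := by
    have : ((V.filter (fun x => vertexWeight E W₀ x = 0)).card : ℝ)
        + ((V.filter (fun x => vertexWeight E W₀ x = 1)).card : ℝ) = (V.card:ℝ) := by
      exact_mod_cast congrArg (Nat.cast (R := ℝ)) hsplit
    linarith [hcard1]
  -- lower bound for covers
  have hlow : ∀ t ∈ {t | ∃ W : Finset α → ℝ, IsFracEdgeCover V E W ∧ t = ∑ e ∈ E, W e},
      (V.card:ℝ) - (k₀:ℝ)/2 ≤ t := by
    rintro t ⟨C, hC, rfl⟩
    obtain ⟨P, hPpack, hPtot⟩ := reduce V E hE _ C hC.1 le_rfl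
    have hPle := hbound P hPpack
    have hexc : ∑ y ∈ V, max (vertexWeight E C y - 1) 0
        = 2 * (∑ e ∈ E, C e) - (V.card:ℝ) := by
      have : ∀ y ∈ V, max (vertexWeight E C y - 1) 0 = vertexWeight E C y - 1 := by
        intro y hy
        exact max_eq_left (by linarith [hC.2 y hy])
      rw [Finset.sum_congr rfl this, Finset.sum_sub_distrib, handshake V E hE C]
      simp
    rw [hexc] at hPtot
    linarith
  -- the all ones cover
  have hones : IsFracEdgeCover V E (fun _ => (1:ℝ)) := by
    constructor
    · intro e _; norm_num
    · intro x hx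
      obtain ⟨e, heE, hxe⟩ := hinc x hx
      exact le_trans (by norm_num) (single_le_vw E _ (fun _ _ => by norm_num) heE hxe)
  have hcovne : {t | ∃ W : Finset α → ℝ, IsFracEdgeCover V E W ∧ t = ∑ e ∈ E, W e}.Nonempty :=
    ⟨_, fun _ => (1:ℝ), hones, rfl⟩
  -- construct a good cover from W₀
  set pick : α → Finset α := fun z => if h : ∃ e ∈ E, z ∈ e then h.choose else ∅ with hpickdef
  have hpick : ∀ z ∈ V, pick z ∈ E ∧ z ∈ pick z := by
    intro z hz
    have h := hinc z hz
    rw [hpickdef]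
    simp only [dif_pos h]
    exact ⟨h.choose_spec.1, h.choose_spec.2⟩
  set p : Finset α → Prop := fun e => ∃ z ∈ V, vertexWeight E W₀ z = 0 ∧ pick z = e with hp
  set C₀ : Finset α → ℝ := fun e => if p e then 1 else W₀ e with hC₀
  have hC₀le : ∀ e ∈ E, W₀ e ≤ C₀ e := by
    intro e heE
    simp only [hC₀]
    split
    · exact (hW₀pack.1 e heE).2
    · exact le_rfl
  have hC₀cover : IsFracEdgeCover V E C₀ := by
    constructor
    · intro e heE
      simp only [hC₀]
      split
      · norm_num
      · exact hW₀pack.1 e heE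
    · intro x hx
      rcases hW₀nice x hx with h0|h1
      · obtain ⟨heE, hxe⟩ := hpick x hx
        have hpe : p (pick x) := ⟨x, hx, h0, rfl⟩
        have : C₀ (pick x) = 1 := by simp only [hC₀]; exact if_pos hpe
        calc (1:ℝ) = C₀ (pick x) := this.symm
          _ ≤ vertexWeight E C₀ x := by
              apply single_le_vw E C₀ _ heE hxe
              intro e heE'
              simp only [hC₀]; split
              · norm_num
              · exact (hW₀pack.1 e heE').1
      · rw [← h1]
        exact vw_mono E W₀ C₀ hC₀le x
  -- total of the cover
  have hD0 : ∀ e ∈ E.filter p, W₀ e = 0 := by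
    intro e he
    obtain ⟨heE, z, hzV, hz0, hze⟩ := Finset.mem_filter.mp he
    obtain ⟨hpE, hzp⟩ := hpick z hzV
    apply le_antisymm _ (hW₀pack.1 e heE).1
    calc W₀ e ≤ vertexWeight E W₀ z := by
          rw [← hze]
          exact single_le_vw E W₀ (fun f hf => (hW₀pack.1 f hf).1) (hze ▸ heE) hzp
      _ = 0 := hz0
  have hC₀tot : (∑ e ∈ E, C₀ e)
      ≤ (∑ e ∈ E, W₀ e) + ((V.filter (fun x => vertexWeight E W₀ x = 0)).card : ℝ) := by
    simp only [hC₀]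
    rw [Finset.sum_ite]
    have h1 : ∑ _e ∈ E.filter p, (1:ℝ) = ((E.filter p).card : ℝ) := by simp
    have h2 : (∑ e ∈ E.filter (fun e => ¬ p e), W₀ e) = ∑ e ∈ E, W₀ e := by
      have := Finset.sum_filter_add_sum_filter_not E p W₀
      have h3 : (∑ e ∈ E.filter p, W₀ e) = 0 :=
        Finset.sum_eq_zero (fun e he => hD0 e he)
      linarith
    rw [h1, h2]
    have hdle : (E.filter p).card ≤ (V.filter (fun x => vertexWeight E W₀ x = 0)).card := by
      have hsub : E.filter p ⊆ (V.filter (fun x => vertexWeight E W₀ x = 0)).image pick := by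
        intro e he
        obtain ⟨heE, z, hzV, hz0, hze⟩ := Finset.mem_filter.mp he
        exact Finset.mem_image.mpr ⟨z, Finset.mem_filter.mpr ⟨hzV, hz0⟩, hze⟩
      exact le_trans (Finset.card_le_card hsub) (Finset.card_image_le)
    have : ((E.filter p).card : ℝ)
        ≤ ((V.filter (fun x => vertexWeight E W₀ x = 0)).card : ℝ) := Nat.cast_le.mpr hdle
    linarith
  -- rho equals |V| - k₀/2
  have hrho : rho V E = (V.card:ℝ) - (k₀:ℝ)/2 := by
    unfold rho
    apply le_antisymm
    · have hmem : (∑ e ∈ E, C₀ e) ∈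
          {t | ∃ W : Finset α → ℝ, IsFracEdgeCover V E W ∧ t = ∑ e ∈ E, W e} :=
        ⟨C₀, hC₀cover, rfl⟩
      have := csInf_le ⟨(V.card:ℝ) - (k₀:ℝ)/2, hlow⟩ hmem
      have h2 : (∑ e ∈ E, C₀ e) ≤ (V.card:ℝ) - (k₀:ℝ)/2 := by
        rw [hW₀tot] at hC₀tot
        rw [hcardZ] at hC₀tot
        linarith
      linarith
    · exact le_csInf hcovne hlow
  refine ⟨W₀, hW₀pack, by rw [htau, hW₀tot], hW₀nice, ?_⟩
  rw [hrho, htau, hcardZ]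
  ring

end BinaryJoins
end

section
/- Let Q be a simple binary join query, G = (V, E) the hypergraph defined by Q, and W any fractional edge covering of G. Then |Join(Q)| ≤ ∏_{e ∈ E} |R_e|^{W(e)}. -/
open scoped BigOperators Classical

namespace BinaryJoins

/-! ### Hypergraphs, fractional edge coverings and packings

A hypergraph is given by a finite vertex set `V : Finset α` and a finite
edge set `E : Finset (Finset α)`.  A weight assignment is a function
`W : Finset α → ℝ` (only its values on `E` matter). -/

variable {α : Type} [DecidableEq α]

/-! ### Tuples, relations, and join queries

`dom` is the domain of values; a tuple over a set `U` of attributes is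
represented as a function `att → Option dom` that is `some`-valued exactly
on `U`. -/

variable {att dom : Type}

/-- A (partial) tuple. -/
abbrev Tup (att dom : Type) := att → Option dom

/-- `u` is a tuple over the attribute set `U`. -/
def IsTupleOn (u : Tup att dom) (U : Set att) : Prop :=
  ∀ x : att, (u x).isSome ↔ x ∈ U

/-- The projection (restriction) of a tuple on an attribute set `V`. -/
noncomputable def restrict (u : Tup att dom) (V : Set att) : Tup att dom :=
  fun x => if x ∈ V then u x else none

/-- A relation: a finite set of tuples over a common scheme. -/
structure Relation (att dom : Type) where
  scheme : Finset att
  tuples : Set (Tup att dom)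
  finite : tuples.Finite
  wf : ∀ u ∈ tuples, IsTupleOn u ↑scheme

variable [DecidableEq att]

/-- A join query is a finite set of relations; `attset Q` is the set of all
attributes appearing in the schemes of its relations. -/
def attset (Q : Finset (Relation att dom)) : Finset att :=
  Q.biUnion fun R => R.scheme

/-- The result `Join(Q)` of a join query. -/
def JoinQ (Q : Finset (Relation att dom)) : Set (Tup att dom) :=
  { u | IsTupleOn u ↑(attset Q) ∧ ∀ R ∈ Q, restrict u ↑R.scheme ∈ R.tuples }

/-- A query is simple if no two distinct relations share a scheme. -/
def SimpleQ (Q : Finset (Relation att dom)) : Prop :=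
  ∀ R ∈ Q, ∀ S ∈ Q, R.scheme = S.scheme → R = S

/-- A query is binary if every relation's scheme has exactly two attributes. -/
def BinaryQ (Q : Finset (Relation att dom)) : Prop :=
  ∀ R ∈ Q, R.scheme.card = 2

/-- The input size `m` of a query. -/
noncomputable def inputSize (Q : Finset (Relation att dom)) : ℕ :=
  ∑ R ∈ Q, R.tuples.ncard

/-- The edge set of the hypergraph defined by `Q` (its vertex set is `attset Q`). -/
def edgeSet (Q : Finset (Relation att dom)) : Finset (Finset att) :=
  Q.image fun R => R.scheme

/-! ### Heavy and light values -/

/-- Value `x` is heavy on attribute `X`: some relation of `Q` has at least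
`m/λ` tuples carrying `x` on `X`. -/
def HeavyOn (Q : Finset (Relation att dom)) (lam : ℕ) (X : att) (x : dom) : Prop :=
  ∃ R ∈ Q, X ∈ R.scheme ∧
    (inputSize Q : ℝ) / (lam : ℝ) ≤ ({u ∈ R.tuples | u X = some x}.ncard : ℝ)

/-- Value `x` is heavy (on some attribute). -/
def Heavy (Q : Finset (Relation att dom)) (lam : ℕ) (x : dom) : Prop :=
  ∃ X : att, HeavyOn Q lam X x

/-- Value `x` appears in at least one relation of `Q`. -/
def Appears (Q : Finset (Relation att dom)) (x : dom) : Prop :=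
  ∃ R ∈ Q, ∃ X ∈ R.scheme, ∃ u ∈ R.tuples, u X = some x

/-- Value `x` appears on attribute `Y` in a relation of `Q`. -/
def AppearsOn (Q : Finset (Relation att dom)) (Y : att) (x : dom) : Prop :=
  ∃ R ∈ Q, Y ∈ R.scheme ∧ ∃ u ∈ R.tuples, u Y = some x

/-! ### Configurations and residual queries

Below, `Hv : att → dom → Prop` is the "heavy" predicate (`Hv X x` meaning
that value `x` is heavy on attribute `X`); in applications it is
instantiated with `HeavyOn Q lam`. -/

/-- The set `config(Q, H)` of configurations of `H`: tuples over `H` whose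
values are heavy. -/
def config (Hv : att → dom → Prop) (H : Finset att) : Set (Tup att dom) :=
  { η | IsTupleOn η ↑H ∧ ∀ X ∈ H, ∀ x : dom, η X = some x → Hv X x }

/-- The residual relation `R'ₑ(η)` (over `e \ H`) of the relation `R` with
scheme `e`, under configuration `η` of `H`: projections on `e \ H` of the
tuples of `R` that agree with `η` on `e ∩ H` and are light outside `H`. -/
def ResidualTuples (Q : Finset (Relation att dom)) (Hv : att → dom → Prop)
    (H : Finset att) (η : Tup att dom) (R : Relation att dom) : Set (Tup att dom) :=
  { v | ∃ w ∈ R.tuples,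
      (∀ X ∈ R.scheme ∩ H, w X = η X) ∧
      (∀ Y ∈ R.scheme \ H, ∀ y : dom, w Y = some y → ¬ Hv Y y ∧ Appears Q y) ∧
      v = restrict w ↑(R.scheme \ H) }

/-- The result of the residual query `Q'(η)`: tuples over `attset Q \ H`
whose projection on each active edge `e` belongs to `R'ₑ(η)`. -/
def JoinResidual (Q : Finset (Relation att dom)) (Hv : att → dom → Prop)
    (H : Finset att) (η : Tup att dom) : Set (Tup att dom) :=
  { u | IsTupleOn u ↑(attset Q \ H) ∧
      ∀ R ∈ Q, (R.scheme \ H).Nonempty →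
        restrict u ↑(R.scheme \ H) ∈ ResidualTuples Q Hv H η R }

/-- `m_η`: the total size of the relations of the residual query `Q'(η)`. -/
noncomputable def residualSize (Q : Finset (Relation att dom)) (Hv : att → dom → Prop)
    (H : Finset att) (η : Tup att dom) : ℕ :=
  ∑ R ∈ Q, if (R.scheme \ H).Nonempty then (ResidualTuples Q Hv H η R).ncard else 0

/-- Combine a tuple over a set disjoint from `H` with a configuration `η` over `H`. -/
def combine (H : Finset att) (η u : Tup att dom) : Tup att dom :=
  fun x => if x ∈ H then η x else u x

/-! ### Cross edges, isolated attributes, and the semi-join reduction -/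

/-- `e` is a cross edge w.r.t. `H`: it meets both `H` and its complement. -/
def IsCross (H : Finset att) (e : Finset att) : Prop :=
  (e ∩ H).Nonempty ∧ (e \ H).Nonempty

/-- The set `I` of isolated attributes: light attributes `X` such that `{X}`
is the only edge incident to `X` in the subgraph induced by the light
attributes `L = attset Q \ H`. -/
def isolatedSet (Q : Finset (Relation att dom)) (H : Finset att) : Finset att :=
  (attset Q \ H).filter fun X => ∀ R ∈ Q, X ∈ R.scheme → R.scheme \ H = {X}

/-- The unary tuple over `{X}` carrying value `x`. -/
def singletonTup (X : att) (x : dom) : Tup att dom :=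
  fun Y => if Y = X then some x else none

/-- `X` is a border attribute: a light attribute appearing in a cross edge. -/
def BorderAttr (Q : Finset (Relation att dom)) (H : Finset att) (X : att) : Prop :=
  X ∈ attset Q ∧ X ∉ H ∧ ∃ R ∈ Q, X ∈ R.scheme ∧ IsCross H R.scheme

/-- The set of values of the unary relation `R''_X(η)`: the intersection of
the residual relations `R'ₑ(η)` over all cross edges `e` containing `X`. -/
def Rpp (Q : Finset (Relation att dom)) (Hv : att → dom → Prop)
    (H : Finset att) (η : Tup att dom) (X : att) : Set dom :=
  { x | ∀ R ∈ Q, IsCross H R.scheme → X ∈ R.scheme →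
      singletonTup X x ∈ ResidualTuples Q Hv H η R }

/-- The cartesian product `Join(Q''_J(η))` of the unary relations `R''_X(η)`,
`X ∈ J` (for `J = I` this is `Join(Q''_isolated(η))`). -/
def JoinIso (Q : Finset (Relation att dom)) (Hv : att → dom → Prop)
    (H : Finset att) (η : Tup att dom) (J : Finset att) : Set (Tup att dom) :=
  { u | IsTupleOn u ↑J ∧ ∀ X ∈ J, ∀ x : dom, u X = some x → x ∈ Rpp Q Hv H η X }

/-! ### The query `Q*` and its hypergraph -/

/-- The result `Join(Q*)` of the query `Q*`: tuples over `I ∪ H` that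
(i) project into `R_e` for every cross edge `e` incident to `I`, (ii) take a
heavy value on every attribute of `H`, and (iii) take, on every `Y ∈ I`, a
value appearing on `Y` in a relation of `Q`. -/
def JoinStar (Q : Finset (Relation att dom)) (Hv : att → dom → Prop)
    (H : Finset att) : Set (Tup att dom) :=
  { t | IsTupleOn t ↑(isolatedSet Q H ∪ H) ∧
      (∀ R ∈ Q, IsCross H R.scheme → (R.scheme ∩ isolatedSet Q H).Nonempty →
        restrict t ↑R.scheme ∈ R.tuples) ∧
      (∀ X ∈ H, ∀ x : dom, t X = some x → Hv X x) ∧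
      (∀ Y ∈ isolatedSet Q H, ∀ y : dom, t Y = some y → AppearsOn Q Y y) }

/-- The edge set `E*` of the hypergraph `G*` of `Q*`: the cross edges of `G`
incident to `I`, a unary edge `{X}` for each `X ∈ H`, and a unary edge `{Y}`
for each `Y ∈ I`.  (Its vertex set is `V* = I ∪ H`.) -/
noncomputable def starEdges (Q : Finset (Relation att dom)) (H : Finset att) :
    Finset (Finset att) :=
  (edgeSet Q).filter (fun e => IsCross H e ∧ (e ∩ isolatedSet Q H).Nonempty)
    ∪ H.image (fun X => {X}) ∪ (isolatedSet Q H).image (fun Y => {Y})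

/-! ### The reduced query `Q''(η)` -/

/-- The reduced relation `R''ₑ(η)` of a light edge `e = scheme R`: the tuples
of `R'ₑ(η)` whose values on border attributes survive the semi-join
reduction. -/
def ReducedTuples (Q : Finset (Relation att dom)) (Hv : att → dom → Prop)
    (H : Finset att) (η : Tup att dom) (R : Relation att dom) : Set (Tup att dom) :=
  { u | u ∈ ResidualTuples Q Hv H η R ∧
      ∀ X ∈ R.scheme, BorderAttr Q H X → ∀ x : dom, u X = some x → x ∈ Rpp Q Hv H η X }

/-- The result `Join(Q''_light(η))`: tuples over `L \ I` whose projection on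
every light edge belongs to the corresponding reduced relation. -/
def JoinLight (Q : Finset (Relation att dom)) (Hv : att → dom → Prop)
    (H : Finset att) (η : Tup att dom) : Set (Tup att dom) :=
  { u | IsTupleOn u ↑((attset Q \ H) \ isolatedSet Q H) ∧
      ∀ R ∈ Q, R.scheme ∩ H = ∅ → restrict u ↑R.scheme ∈ ReducedTuples Q Hv H η R }

/-- The result `Join(Q''(η))` of the reduced query: tuples over `L` whose
projections on light edges are in the reduced relations and whose values on
isolated attributes are in the corresponding unary relations. -/
def JoinReduced (Q : Finset (Relation att dom)) (Hv : att → dom → Prop)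
    (H : Finset att) (η : Tup att dom) : Set (Tup att dom) :=
  { u | IsTupleOn u ↑(attset Q \ H) ∧
      (∀ R ∈ Q, R.scheme ∩ H = ∅ → restrict u ↑R.scheme ∈ ReducedTuples Q Hv H η R) ∧
      (∀ X ∈ isolatedSet Q H, ∀ x : dom, u X = some x → x ∈ Rpp Q Hv H η X) }



/-! Induction on the attributes (Atserias–Grohe–Marx). Fix an attribute `X` and split the join
according to the value `o` taken at `X`: each part embeds into the join of the *slices* at `o`
(the tuples taking value `o` at `X`, with `X` projected away), which by induction has size at
most `∏ |slice_i(o)|^{w_i}`. Summing over `o`, Hölder's inequality with the exponents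
`w_i / ∑_{j ∋ X} w_j` bounds `∑_o ∏_{i ∋ X} |slice_i(o)|^{w_i}` by `∏_{i ∋ X} |T_i|^{w_i}`,
because the weights at `X` add up to at least one and the slices of `T_i` partition it. -/

theorem sum_prod_rpow_le_prod_sum_rpow {κ β : Type*} (S : Finset κ) (D : Finset β)
    {a : κ → β → ℝ} {p : κ → ℝ} (ha : ∀ i ∈ S, ∀ o ∈ D, 0 ≤ a i o) (hp : ∀ i ∈ S, 0 ≤ p i)
    (hp1 : ∑ i ∈ S, p i = 1) :
    ∑ o ∈ D, ∏ i ∈ S, a i o ^ p i ≤ ∏ i ∈ S, (∑ o ∈ D, a i o) ^ p i := by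
  -- Hölder's inequality for the counting measure on `D`, transported along `ENNReal.ofReal`.
  let _ : MeasurableSpace D := ⊤
  have hholder := ENNReal.lintegral_prod_norm_pow_le (μ := MeasureTheory.Measure.count) S
    (f := fun i (o : D) => ENNReal.ofReal (a i o))
    (fun _ _ => (measurable_of_countable _).aemeasurable) hp1 hp
  simp only [MeasureTheory.lintegral_fintype, MeasureTheory.Measure.count_singleton,
    mul_one] at hholder
  have hsum : ∀ i ∈ S, 0 ≤ ∑ o ∈ D, a i o := fun i hi => Finset.sum_nonneg (ha i hi)
  have hlhs : ∑ o : D, ∏ i ∈ S, ENNReal.ofReal (a i o) ^ p i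
      = ENNReal.ofReal (∑ o ∈ D, ∏ i ∈ S, a i o ^ p i) := by
    rw [ENNReal.ofReal_sum_of_nonneg fun o ho => Finset.prod_nonneg fun i hi =>
      Real.rpow_nonneg (ha i hi o ho) _, ← Finset.sum_coe_sort D]
    refine Finset.sum_congr rfl fun o _ => ?_
    rw [ENNReal.ofReal_prod_of_nonneg fun i hi => Real.rpow_nonneg (ha i hi o o.2) _]
    exact Finset.prod_congr rfl fun i hi =>
      ENNReal.ofReal_rpow_of_nonneg (ha i hi o o.2) (hp i hi)
  have hrhs : ∏ i ∈ S, (∑ o : D, ENNReal.ofReal (a i o)) ^ p i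
      = ENNReal.ofReal (∏ i ∈ S, (∑ o ∈ D, a i o) ^ p i) := by
    rw [ENNReal.ofReal_prod_of_nonneg fun i hi => Real.rpow_nonneg (hsum i hi) _]
    refine Finset.prod_congr rfl fun i hi => ?_
    rw [Finset.sum_coe_sort D fun o => ENNReal.ofReal (a i o),
      ← ENNReal.ofReal_sum_of_nonneg (ha i hi), ENNReal.ofReal_rpow_of_nonneg (hsum i hi) (hp i hi)]
  rw [hlhs, hrhs] at hholder
  exact (ENNReal.ofReal_le_ofReal_iff
    (Finset.prod_nonneg fun i hi => Real.rpow_nonneg (hsum i hi) _)).mp hholder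

/-- Hölder's inequality with the exponents `w i / ∑ w`; the surplus exponents are absorbed
using `a i o ≤ b i`. -/
theorem sum_prod_rpow_le_prod_rpow {κ β : Type*} (S : Finset κ) (D : Finset β)
    {a : κ → β → ℝ} {b w : κ → ℝ} (ha : ∀ i ∈ S, ∀ o ∈ D, 0 ≤ a i o)
    (hab : ∀ i ∈ S, ∑ o ∈ D, a i o ≤ b i) (hw : ∀ i ∈ S, 0 ≤ w i)
    (hw1 : 1 ≤ ∑ i ∈ S, w i) :
    ∑ o ∈ D, ∏ i ∈ S, a i o ^ w i ≤ ∏ i ∈ S, b i ^ w i := by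
  set p : κ → ℝ := fun i => w i / ∑ j ∈ S, w j
  have hp : ∀ i ∈ S, 0 ≤ p i := fun i hi => div_nonneg (hw i hi) (by linarith)
  have hpw : ∀ i ∈ S, 0 ≤ w i - p i := fun i hi => sub_nonneg.mpr (div_le_self (hw i hi) hw1)
  have hp1 : ∑ i ∈ S, p i = 1 := by rw [← Finset.sum_div, div_self (by linarith)]
  have hsum : ∀ i ∈ S, 0 ≤ ∑ o ∈ D, a i o := fun i hi => Finset.sum_nonneg (ha i hi)
  have hb : ∀ i ∈ S, 0 ≤ b i := fun i hi => (hsum i hi).trans (hab i hi)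
  have hsplit : ∀ i ∈ S, ∀ o ∈ D, a i o ^ w i ≤ a i o ^ p i * b i ^ (w i - p i) := by
    intro i hi o ho
    calc a i o ^ w i = a i o ^ p i * a i o ^ (w i - p i) := by
          rw [← Real.rpow_add_of_nonneg (ha i hi o ho) (hp i hi) (hpw i hi), add_sub_cancel]
      _ ≤ a i o ^ p i * b i ^ (w i - p i) :=
          mul_le_mul_of_nonneg_left (Real.rpow_le_rpow (ha i hi o ho)
            ((Finset.single_le_sum (ha i hi) ho).trans (hab i hi)) (hpw i hi))
            (Real.rpow_nonneg (ha i hi o ho) _)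
  set C := ∏ i ∈ S, b i ^ (w i - p i)
  have hC : 0 ≤ C := Finset.prod_nonneg fun i hi => Real.rpow_nonneg (hb i hi) _
  calc ∑ o ∈ D, ∏ i ∈ S, a i o ^ w i
      ≤ ∑ o ∈ D, (∏ i ∈ S, a i o ^ p i) * C := by
        refine Finset.sum_le_sum fun o ho => ?_
        rw [← Finset.prod_mul_distrib]
        exact Finset.prod_le_prod (fun i hi => Real.rpow_nonneg (ha i hi o ho) _)
          fun i hi => hsplit i hi o ho
    _ = (∑ o ∈ D, ∏ i ∈ S, a i o ^ p i) * C := by rw [Finset.sum_mul]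
    _ ≤ (∏ i ∈ S, (∑ o ∈ D, a i o) ^ p i) * C :=
        mul_le_mul_of_nonneg_right (sum_prod_rpow_le_prod_sum_rpow S D ha hp hp1) hC
    _ ≤ (∏ i ∈ S, b i ^ p i) * C :=
        mul_le_mul_of_nonneg_right (Finset.prod_le_prod
          (fun i hi => Real.rpow_nonneg (hsum i hi) _)
          fun i hi => Real.rpow_le_rpow (hsum i hi) (hab i hi) (hp i hi)) hC
    _ = ∏ i ∈ S, b i ^ w i := by
        rw [← Finset.prod_mul_distrib]
        refine Finset.prod_congr rfl fun i hi => ?_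
        rw [← Real.rpow_add_of_nonneg (hb i hi) (hp i hi) (hpw i hi), add_sub_cancel]

variable {ι : Type*}

section Tuples

omit [DecidableEq att]

theorem IsTupleOn.ext {u v : Tup att dom} {U : Set att} (hu : IsTupleOn u U)
    (hv : IsTupleOn v U) (h : ∀ x ∈ U, u x = v x) : u = v := by
  funext x
  by_cases hx : x ∈ U
  · exact h x hx
  · rw [Option.not_isSome_iff_eq_none.mp (mt (hu x).1 hx),
      Option.not_isSome_iff_eq_none.mp (mt (hv x).1 hx)]

theorem isTupleOn_restrict {u : Tup att dom} {U C : Set att} (h : IsTupleOn u U) (hC : C ⊆ U) :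
    IsTupleOn (restrict u C) C := by
  intro x
  by_cases hx : x ∈ C
  · simpa [restrict, hx] using (h x).2 (hC hx)
  · simp [restrict, hx]

theorem restrict_restrict (u : Tup att dom) {B C : Set att} (h : C ⊆ B) :
    restrict (restrict u B) C = restrict u C := by
  funext x
  by_cases hx : x ∈ C
  · simp [restrict, hx, h hx]
  · simp [restrict, hx]

theorem restrict_eq_self {u : Tup att dom} {U : Set att} (h : IsTupleOn u U) :
    restrict u U = u :=
  (isTupleOn_restrict h subset_rfl).ext h fun _ hx => if_pos hx

/-- Relations are passed as schemes `s i` and tuple sets `T i` rather than as `Relation`s, so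
that slices can be formed without finiteness proofs. -/
def joinOf (A : Finset att) (I : Finset ι) (s : ι → Finset att) (T : ι → Set (Tup att dom)) :
    Set (Tup att dom) :=
  {u | IsTupleOn u ↑A ∧ ∀ i ∈ I, restrict u ↑(s i) ∈ T i}

variable {A : Finset att} {I : Finset ι} {s : ι → Finset att} {T : ι → Set (Tup att dom)}

theorem joinOf_finite (hT : ∀ i ∈ I, (T i).Finite) (hcov : ∀ X ∈ A, ∃ i ∈ I, X ∈ s i) :
    (joinOf A I s T).Finite := by
  have hproj : ((fun u (i : I) => restrict u ↑(s i)) '' joinOf A I s T).Finite :=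
    (Set.Finite.pi (t := fun i : I => T i) fun i => hT i i.2).subset <| by
      rintro _ ⟨u, hu, rfl⟩ i -
      exact hu.2 i i.2
  refine hproj.of_finite_image fun u hu v hv huv => hu.1.ext hv.1 fun X hX => ?_
  obtain ⟨i, hi, hXi⟩ := hcov X hX
  simpa [restrict, hXi] using congrFun (congrFun huv ⟨i, hi⟩) X

theorem ncard_joinOf_empty_le {w : ι → ℝ} (hT : ∀ i ∈ I, (T i).Finite)
    (hw : ∀ i ∈ I, 0 ≤ w i) :
    ((joinOf ∅ I s T).ncard : ℝ) ≤ ∏ i ∈ I, ((T i).ncard : ℝ) ^ w i := by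
  rcases (joinOf ∅ I s T).eq_empty_or_nonempty with hJ | ⟨u, hu⟩
  · rw [hJ, Set.ncard_empty, Nat.cast_zero]
    exact Finset.prod_nonneg fun i _ => Real.rpow_nonneg (Nat.cast_nonneg _) _
  have hsub : (joinOf ∅ I s T).Subsingleton := fun v hv v' hv' =>
    hv.1.ext hv'.1 fun x hx => absurd hx (Finset.notMem_empty x)
  have hone : ∀ i ∈ I, (1 : ℝ) ≤ (T i).ncard := fun i hi => by
    exact_mod_cast (Set.ncard_pos (hT i hi)).mpr ⟨_, hu.2 i hi⟩
  calc ((joinOf ∅ I s T).ncard : ℝ) ≤ 1 := by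
        exact_mod_cast (Set.ncard_le_one hsub.finite).mpr hsub
    _ ≤ _ := Finset.one_le_prod fun i hi => Real.one_le_rpow (hone i hi) (hw i hi)

end Tuples

def slice (e : Finset att) (T : Set (Tup att dom)) (X : att) (o : Option dom) :
    Set (Tup att dom) :=
  (fun v => restrict v ↑(e.erase X)) '' {v ∈ T | X ∈ e → v X = o}

section Slice

variable {e : Finset att} {T : Set (Tup att dom)} {X : att}

theorem slice_finite (hT : T.Finite) (o : Option dom) : (slice e T X o).Finite :=
  (hT.subset (Set.sep_subset _ _)).image _

theorem isTupleOn_of_mem_slice (hwf : ∀ v ∈ T, IsTupleOn v ↑e) {o : Option dom} :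
    ∀ v ∈ slice e T X o, IsTupleOn v ↑(e.erase X) := by
  rintro _ ⟨v, hv, rfl⟩
  exact isTupleOn_restrict (hwf v hv.1) (Finset.coe_subset.mpr (Finset.erase_subset X e))

theorem slice_of_notMem (hwf : ∀ v ∈ T, IsTupleOn v ↑e) (hX : X ∉ e) (o : Option dom) :
    slice e T X o = T := by
  have hsep : {v ∈ T | X ∈ e → v X = o} = T :=
    Set.sep_eq_self_iff_mem_true.mpr fun _ _ h => absurd h hX
  rw [slice, hsep, Finset.erase_eq_of_notMem hX]
  exact (Set.image_congr fun v hv => restrict_eq_self (hwf v hv)).trans (Set.image_id T)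

theorem sum_ncard_slice_le (hT : T.Finite) (hX : X ∈ e) (D : Finset (Option dom)) :
    ∑ o ∈ D, (slice e T X o).ncard ≤ T.ncard := by
  have hfiber : ∀ o, {v ∈ T | X ∈ e → v X = o}.ncard = (hT.toFinset.filter (· X = o)).card := by
    intro o
    rw [← Set.ncard_coe_finset, Finset.coe_filter]
    simp [hX]
  calc ∑ o ∈ D, (slice e T X o).ncard
      ≤ ∑ o ∈ D, (hT.toFinset.filter (· X = o)).card := Finset.sum_le_sum fun o _ =>
        (Set.ncard_image_le (hT.subset (Set.sep_subset _ _))).trans (hfiber o).le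
    _ = (hT.toFinset.filter (· X ∈ D)).card := Finset.sum_card_fiberwise_eq_card_filter _ _ _
    _ ≤ T.ncard := (Finset.card_filter_le _ _).trans (Set.ncard_eq_toFinset_card T hT).ge

end Slice

section Induction

variable {A : Finset att} {I : Finset ι} {s : ι → Finset att} {T : ι → Set (Tup att dom)}
  {X : att}

theorem ncard_joinOf_insert_le (hs : ∀ i ∈ I, s i ⊆ insert X A) (D : Finset (Option dom))
    (hD : ∀ u ∈ joinOf (insert X A) I s T, u X ∈ D)
    (hfin : ∀ o ∈ D,
      (joinOf A I (fun i => (s i).erase X) (fun i => slice (s i) (T i) X o)).Finite) :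
    (joinOf (insert X A) I s T).ncard ≤
      ∑ o ∈ D, (joinOf A I (fun i => (s i).erase X) (fun i => slice (s i) (T i) X o)).ncard := by
  set J := joinOf (insert X A) I s T
  have hJ : J = ⋃ o ∈ D, {u ∈ J | u X = o} := by
    ext u
    simp only [Set.mem_iUnion, Set.mem_sep_iff, exists_prop]
    exact ⟨fun hu => ⟨u X, hD u hu, hu, rfl⟩, fun ⟨_, _, hu, _⟩ => hu⟩
  have hmaps : ∀ o, Set.MapsTo (fun u => restrict u ↑A) {u ∈ J | u X = o}
      (joinOf A I (fun i => (s i).erase X) (fun i => slice (s i) (T i) X o)) := by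
    rintro o u ⟨hu, rfl⟩
    refine ⟨isTupleOn_restrict hu.1 (Finset.coe_subset.mpr (Finset.subset_insert X A)),
      fun i hi => ?_⟩
    rw [restrict_restrict u (Finset.coe_subset.mpr (Finset.subset_insert_iff.mp (hs i hi))),
      ← restrict_restrict u (Finset.coe_subset.mpr (Finset.erase_subset X (s i)))]
    exact ⟨_, ⟨hu.2 i hi, fun hXi => if_pos hXi⟩, rfl⟩
  have hinj : ∀ o, Set.InjOn (fun u => restrict u ↑A) {u ∈ J | u X = o} := by
    rintro o u ⟨hu, rfl⟩ v ⟨hv, hvX⟩ huv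
    refine hu.1.ext hv.1 fun Y hY => ?_
    rcases Finset.mem_insert.mp hY with rfl | hYA
    · exact hvX.symm
    · simpa [restrict, hYA] using congrFun huv Y
  calc J.ncard = (⋃ o ∈ D, {u ∈ J | u X = o}).ncard := congrArg Set.ncard hJ
    _ ≤ ∑ o ∈ D, {u ∈ J | u X = o}.ncard := Finset.set_ncard_biUnion_le D _
    _ ≤ _ := Finset.sum_le_sum fun o ho =>
      Set.ncard_le_ncard_of_injOn _ (hmaps o) (hinj o) (hfin o ho)

theorem sum_prod_ncard_slice_le {w : ι → ℝ} (hT : ∀ i ∈ I, (T i).Finite)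
    (hwf : ∀ i ∈ I, ∀ v ∈ T i, IsTupleOn v ↑(s i)) (hw : ∀ i ∈ I, 0 ≤ w i)
    (hX : 1 ≤ ∑ i ∈ I with X ∈ s i, w i) (D : Finset (Option dom)) :
    ∑ o ∈ D, ∏ i ∈ I, ((slice (s i) (T i) X o).ncard : ℝ) ^ w i ≤
      ∏ i ∈ I, ((T i).ncard : ℝ) ^ w i := by
  have hrest : ∀ o, ∏ i ∈ I with X ∉ s i, ((slice (s i) (T i) X o).ncard : ℝ) ^ w i =
      ∏ i ∈ I with X ∉ s i, ((T i).ncard : ℝ) ^ w i := fun o =>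
    Finset.prod_congr rfl fun i hi => by
      rw [Finset.mem_filter] at hi
      rw [slice_of_notMem (hwf i hi.1) hi.2]
  simp_rw [← Finset.prod_filter_mul_prod_filter_not I (fun i => X ∈ s i), hrest,
    ← Finset.sum_mul]
  refine mul_le_mul_of_nonneg_right ?_
    (Finset.prod_nonneg fun i _ => Real.rpow_nonneg (Nat.cast_nonneg _) _)
  refine sum_prod_rpow_le_prod_rpow _ D (fun _ _ _ _ => Nat.cast_nonneg _) (fun i hi => ?_)
    (fun i hi => hw i (Finset.mem_filter.mp hi).1) hX
  rw [Finset.mem_filter] at hi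
  exact_mod_cast sum_ncard_slice_le (hT i hi.1) hi.2 D

end Induction

theorem ncard_joinOf_le_prod_rpow (A : Finset att) (I : Finset ι) (s : ι → Finset att)
    (T : ι → Set (Tup att dom)) (w : ι → ℝ) (hs : ∀ i ∈ I, s i ⊆ A)
    (hT : ∀ i ∈ I, (T i).Finite) (hwf : ∀ i ∈ I, ∀ v ∈ T i, IsTupleOn v ↑(s i))
    (hw : ∀ i ∈ I, 0 ≤ w i) (hcov : ∀ X ∈ A, 1 ≤ ∑ i ∈ I with X ∈ s i, w i) :
    ((joinOf A I s T).ncard : ℝ) ≤ ∏ i ∈ I, ((T i).ncard : ℝ) ^ w i := by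
  induction A using Finset.induction_on generalizing s T with
  | empty => exact ncard_joinOf_empty_le hT hw
  | insert X A hXA ih =>
    set s' : ι → Finset att := fun i => (s i).erase X
    set T' : Option dom → ι → Set (Tup att dom) := fun o i => slice (s i) (T i) X o
    have hcov' : ∀ Y ∈ A, 1 ≤ ∑ i ∈ I with Y ∈ s' i, w i := fun Y hY => by
      have hYX : Y ≠ X := fun h => hXA (h ▸ hY)
      simpa [s', Finset.mem_erase, hYX] using hcov Y (Finset.mem_insert_of_mem hY)
    have hexists : ∀ {B : Finset att} {t : ι → Finset att},
        (∀ Y ∈ B, 1 ≤ ∑ i ∈ I with Y ∈ t i, w i) → ∀ Y ∈ B, ∃ i ∈ I, Y ∈ t i := by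
      intro B t h Y hY
      obtain ⟨i, hi, -⟩ := Finset.exists_ne_zero_of_sum_ne_zero
        (show ∑ i ∈ I with Y ∈ t i, w i ≠ 0 by linarith [h Y hY])
      exact ⟨i, (Finset.mem_filter.mp hi).1, (Finset.mem_filter.mp hi).2⟩
    have hJ := joinOf_finite (A := insert X A) (s := s) hT (hexists hcov)
    calc ((joinOf (insert X A) I s T).ncard : ℝ)
        ≤ ∑ o ∈ hJ.toFinset.image (· X), ((joinOf A I s' (T' o)).ncard : ℝ) := by
          exact_mod_cast ncard_joinOf_insert_le hs _
            (fun u hu => Finset.mem_image_of_mem _ (hJ.mem_toFinset.mpr hu))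
            fun o _ => joinOf_finite (fun i hi => slice_finite (hT i hi) o) (hexists hcov')
      _ ≤ ∑ o ∈ hJ.toFinset.image (· X), ∏ i ∈ I, ((T' o i).ncard : ℝ) ^ w i :=
          Finset.sum_le_sum fun o _ =>
            ih _ _ (fun i hi => Finset.subset_insert_iff.mp (hs i hi))
              (fun i hi => slice_finite (hT i hi) o)
              (fun i hi => isTupleOn_of_mem_slice (hwf i hi)) hcov'
      _ ≤ ∏ i ∈ I, ((T i).ncard : ℝ) ^ w i :=
          sum_prod_ncard_slice_le hT hwf hw (hcov X (Finset.mem_insert_self X A)) _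

theorem vertexWeight_edgeSet {Q : Finset (Relation att dom)} (hS : SimpleQ Q)
    (W : Finset att → ℝ) (X : att) :
    vertexWeight (edgeSet Q) W X = ∑ R ∈ Q with X ∈ R.scheme, W R.scheme := by
  rw [vertexWeight, edgeSet, Finset.filter_image, Finset.sum_image fun R hR R' hR' =>
    hS R (Finset.mem_filter.mp hR).1 R' (Finset.mem_filter.mp hR').1]

theorem agm_bound_general
    (Q : Finset (Relation att dom)) (hS : SimpleQ Q)
    (W : Finset att → ℝ) (hW : IsFracEdgeCover (attset Q) (edgeSet Q) W) :
    ((JoinQ Q).ncard : ℝ) ≤ ∏ R ∈ Q, (R.tuples.ncard : ℝ) ^ W R.scheme :=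
  ncard_joinOf_le_prod_rpow (attset Q) Q Relation.scheme Relation.tuples (fun R => W R.scheme)
    (fun _ hR => Finset.subset_biUnion_of_mem _ hR) (fun R _ => R.finite) (fun R _ => R.wf)
    (fun _ hR => (hW.1 _ (Finset.mem_image_of_mem _ hR)).1)
    fun X hX => vertexWeight_edgeSet hS W X ▸ hW.2 X hX

/-- **AGM bound.** For a simple binary join query `Q` and any
fractional edge covering `W` of its hypergraph,
`|Join(Q)| ≤ ∏_{e ∈ E} |R_e|^{W(e)}`.  (Since `Q` is simple, the product
over the edges `e ∈ E` is the product over the relations `R ∈ Q` of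
`|R|^{W(scheme R)}`.) -/
theorem agm_bound [Finite att] [Countable dom] [Infinite dom]
    (Q : Finset (Relation att dom)) (hS : SimpleQ Q) (hB : BinaryQ Q)
    (W : Finset att → ℝ) (hW : IsFracEdgeCover (attset Q) (edgeSet Q) W) :
    ((JoinQ Q).ncard : ℝ) ≤ ∏ R ∈ Q, (R.tuples.ncard : ℝ) ^ W R.scheme :=
  agm_bound_general Q hS W hW

end BinaryJoins
end

section
/- Let Q be a simple binary join query with input size m, λ ∈ [1, m] an integer, H ⊆ attset(Q), and I the set of isolated attributes. Then Σ_{η ∈ config(Q, H)} |Join(Q''_isolated(η))| ≤ |Join(Q*)|. -/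
open scoped BigOperators Classical

/- Gluing a configuration `η` of `H` to a tuple `u` of `∏_{X ∈ I} R''_X(η)` gives a tuple of
`Join(Q*)`: an isolated attribute `Y` lies only in cross edges `e` with `e \ H = {Y}`, and the
value of `u` on `Y` comes from a tuple of `R_e` agreeing with `η` on `e ∩ H`. The glued tuple
remembers `η` (its restriction to `H`) and `u`, so the gluing maps are injective with
pairwise disjoint images, and the sum is at most `|Join(Q*)|`. -/

open Set in
theorem finsum_mem_ncard_le_ncard_of_injOn {ι β γ : Type*} {S : Set ι} {A : ι → Set β}
    {T : Set γ} (hT : T.Finite) (f : ι → β → γ) (hmaps : ∀ i ∈ S, MapsTo (f i) (A i) T)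
    (hinj : ∀ i ∈ S, InjOn (f i) (A i)) (hdisj : S.PairwiseDisjoint fun i => f i '' A i) :
    ∑ᶠ i ∈ S, (A i).ncard ≤ T.ncard := by
  set S' := S ∩ Function.support fun i => (A i).ncard
  by_cases hS' : S'.Finite
  swap
  · rw [finsum_mem_eq_zero_of_infinite hS']
    exact Nat.zero_le _
  have hS'S : S' ⊆ S := inter_subset_left
  calc ∑ᶠ i ∈ S, (A i).ncard
      = ∑ᶠ i ∈ S', (f i '' A i).ncard := by
        rw [← finsum_mem_inter_support]
        exact finsum_mem_congr rfl fun i hi => (hinj i (hS'S hi)).ncard_image.symm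
    _ = (⋃ i ∈ S', f i '' A i).ncard :=
        (hS'.ncard_biUnion (fun i hi => hT.subset (hmaps i (hS'S hi)).image_subset)
          (hdisj.subset hS'S)).symm
    _ ≤ T.ncard :=
        ncard_le_ncard (iUnion₂_subset fun i hi => (hmaps i (hS'S hi)).image_subset) hT

theorem finite_setOf_forall_eq_some_mem {α β : Type*} [Finite α] {A : α → Set β}
    (hA : ∀ a, (A a).Finite) :
    {t : α → Option β | ∀ a x, t a = some x → x ∈ A a}.Finite := by
  refine (Set.Finite.pi fun a => ((hA a).image some).insert none).subset ?_
  intro t ht a _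
  cases hx : t a with
  | none => exact Set.mem_insert _ _
  | some x => exact Set.mem_insert_of_mem _ ⟨x, ht a x hx, rfl⟩

namespace BinaryJoins

variable {att dom : Type}

theorem IsTupleOn.eq_none {u : Tup att dom} {U : Set att} (hu : IsTupleOn u U) {x : att}
    (hx : x ∉ U) : u x = none := by
  rw [← Option.not_isSome_iff_eq_none, hu x]
  exact hx

theorem IsTupleOn.mem {u : Tup att dom} {U : Set att} (hu : IsTupleOn u U) {x : att}
    {y : dom} (hx : u x = some y) : x ∈ U :=
  (hu x).1 (by simp [hx])

theorem restrict_eq_of_isTupleOn {u w : Tup att dom} {U : Set att} (hw : IsTupleOn w U)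
    (h : ∀ x ∈ U, u x = w x) : restrict u U = w := by
  funext x
  by_cases hx : x ∈ U
  · simp [restrict, hx, h x hx]
  · simp [restrict, hx, hw.eq_none hx]

variable (Q : Finset (Relation att dom))

theorem appearsOn_finite (a : att) : {x : dom | AppearsOn Q a x}.Finite := by
  refine ((Q.finite_toSet.biUnion fun R _ =>
    (R.finite.image fun u => u a).preimage (Option.some_injective dom).injOn)).subset ?_
  rintro x ⟨R, hR, -, u, hu, hux⟩
  exact Set.mem_biUnion hR ⟨u, hu, hux⟩

theorem appearsOn_of_heavyOn {lam : ℕ} (hlam1 : 1 ≤ lam) (hlam2 : lam ≤ inputSize Q)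
    {X : att} {x : dom} (h : HeavyOn Q lam X x) : AppearsOn Q X x := by
  obtain ⟨R, hR, hX, hcard⟩ := h
  have hpos : (0 : ℝ) < (inputSize Q : ℝ) / (lam : ℝ) :=
    div_pos (by exact_mod_cast hlam1.trans hlam2) (by exact_mod_cast hlam1)
  obtain ⟨u, hu, hux⟩ : {u ∈ R.tuples | u X = some x}.Nonempty :=
    Set.nonempty_of_ncard_ne_zero (by exact_mod_cast (hpos.trans_le hcard).ne')
  exact ⟨R, hR, hX, u, hu, hux⟩

variable [DecidableEq att]

theorem restrict_combine_self {H : Finset att} {η : Tup att dom} (u : Tup att dom)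
    (hη : IsTupleOn η ↑H) : restrict (combine H η u) ↑H = η :=
  restrict_eq_of_isTupleOn hη fun x hx => by simp [combine, Finset.mem_coe.1 hx]

theorem restrict_combine_of_disjoint {H J : Finset att} (hJH : Disjoint J H)
    {η u : Tup att dom} (hu : IsTupleOn u ↑J) : restrict (combine H η u) ↑J = u :=
  restrict_eq_of_isTupleOn hu fun x hx => by
    simp [combine, Finset.disjoint_left.1 hJH (Finset.mem_coe.1 hx)]

theorem combine_injOn {H J : Finset att} (hJH : Disjoint J H) (η : Tup att dom)
    {S : Set (Tup att dom)} (hS : ∀ u ∈ S, IsTupleOn u ↑J) : Set.InjOn (combine H η) S := by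
  intro u hu u' hu' h
  rw [← restrict_combine_of_disjoint hJH (hS u hu), h,
    restrict_combine_of_disjoint hJH (hS u' hu')]

theorem pairwiseDisjoint_image_combine {H : Finset att} {S : Set (Tup att dom)}
    (hS : ∀ η ∈ S, IsTupleOn η ↑H) (A : Tup att dom → Set (Tup att dom)) :
    S.PairwiseDisjoint fun η => combine H η '' A η := by
  rintro η hη η' hη' hne
  refine Set.disjoint_left.2 ?_
  rintro _ ⟨u, -, rfl⟩ ⟨u', -, h⟩
  apply hne
  rw [← restrict_combine_self u (hS η hη), ← h, restrict_combine_self u' (hS η' hη')]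

variable {Q} {H : Finset att}

theorem disjoint_isolatedSet : Disjoint (isolatedSet Q H) H :=
  Finset.disjoint_left.2 fun _ hX => (Finset.mem_sdiff.1 (Finset.mem_filter.1 hX).1).2

theorem exists_isCross_of_mem_isolatedSet (hB : BinaryQ Q) {Y : att}
    (hY : Y ∈ isolatedSet Q H) :
    ∃ R ∈ Q, Y ∈ R.scheme ∧ IsCross H R.scheme := by
  obtain ⟨hYa, hiso⟩ := Finset.mem_filter.1 hY
  obtain ⟨R, hR, hYs⟩ := Finset.mem_biUnion.1 (Finset.mem_sdiff.1 hYa).1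
  have hsd : R.scheme \ H = {Y} := hiso R hR hYs
  refine ⟨R, hR, hYs, ?_, ⟨Y, by simp [hsd]⟩⟩
  by_contra hRH
  have hcard := hB R hR
  rw [← Finset.sdiff_eq_self_of_disjoint (Finset.disjoint_iff_inter_eq_empty.2
    (Finset.not_nonempty_iff_eq_empty.1 hRH)), hsd] at hcard
  simp at hcard

theorem eq_some_of_singletonTup_mem_residualTuples {Hv : att → dom → Prop}
    {η : Tup att dom} {R : Relation att dom} {Y : att} {x : dom}
    (h : singletonTup Y x ∈ ResidualTuples Q Hv H η R) (hY : Y ∈ R.scheme) (hYH : Y ∉ H) :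
    ∃ w ∈ R.tuples, (∀ X ∈ R.scheme ∩ H, w X = η X) ∧ w Y = some x := by
  obtain ⟨w, hw, hwη, -, hwY⟩ := h
  refine ⟨w, hw, hwη, ?_⟩
  have := congrFun hwY Y
  simp only [singletonTup, restrict, if_true, Finset.coe_sdiff, Set.mem_sdiff,
    Finset.mem_coe, hY, hYH, not_false_eq_true, and_self] at this
  exact this.symm

theorem appearsOn_of_mem_Rpp (hB : BinaryQ Q) {Hv : att → dom → Prop} {η : Tup att dom}
    {Y : att} {x : dom} (hY : Y ∈ isolatedSet Q H) (hx : x ∈ Rpp Q Hv H η Y) :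
    AppearsOn Q Y x := by
  obtain ⟨R, hR, hYs, hcross⟩ := exists_isCross_of_mem_isolatedSet hB hY
  obtain ⟨w, hw, -, hwY⟩ := eq_some_of_singletonTup_mem_residualTuples
    (hx R hR hcross hYs) hYs (Finset.disjoint_left.1 disjoint_isolatedSet hY)
  exact ⟨R, hR, hYs, w, hw, hwY⟩

theorem joinStar_finite [Finite att] {Hv : att → dom → Prop}
    (hHv : ∀ X x, Hv X x → AppearsOn Q X x) : (JoinStar Q Hv H).Finite :=
  (finite_setOf_forall_eq_some_mem (appearsOn_finite Q)).subset fun t ht a x hx => by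
    rcases Finset.mem_union.1 (Finset.mem_coe.1 (ht.1.mem hx)) with haI | haH
    · exact ht.2.2.2 a haI x hx
    · exact hHv a x (ht.2.2.1 a haH x hx)

theorem combine_mem_joinStar (hB : BinaryQ Q) {Hv : att → dom → Prop} {η u : Tup att dom}
    (hη : η ∈ config Hv H) (hu : u ∈ JoinIso Q Hv H η (isolatedSet Q H)) :
    combine H η u ∈ JoinStar Q Hv H := by
  refine ⟨fun x => ?_, fun R hR hcross ⟨Z, hZ⟩ => ?_, fun X hX x hx => ?_, fun Y hY y hy => ?_⟩
  · by_cases hx : x ∈ H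
    · simp [combine, hx, hη.1 x]
    · simp [combine, hx, hu.1 x]
  · obtain ⟨hZs, hZI⟩ := Finset.mem_inter.1 hZ
    have hZH : Z ∉ H := Finset.disjoint_left.1 disjoint_isolatedSet hZI
    have hsd : R.scheme \ H = {Z} := (Finset.mem_filter.1 hZI).2 R hR hZs
    obtain ⟨z, hz⟩ := Option.isSome_iff_exists.1 ((hu.1 Z).2 hZI)
    obtain ⟨w, hw, hwη, hwZ⟩ :=
      eq_some_of_singletonTup_mem_residualTuples (hu.2 Z hZI z hz R hR hcross hZs) hZs hZH
    rwa [restrict_eq_of_isTupleOn (R.wf w hw) fun x hx => ?_]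
    by_cases hxH : x ∈ H
    · simp [combine, hxH, hwη x (Finset.mem_inter.2 ⟨hx, hxH⟩)]
    · obtain rfl : x = Z := by
        simpa [hsd] using Finset.mem_sdiff.2 ⟨Finset.mem_coe.1 hx, hxH⟩
      simp [combine, hxH, hz, hwZ]
  · exact hη.2 X hX x (by simpa [combine, hX] using hx)
  · have hYH : Y ∉ H := Finset.disjoint_left.1 disjoint_isolatedSet hY
    exact appearsOn_of_mem_Rpp hB hY (hu.2 Y hY y (by simpa [combine, hYH] using hy))

theorem iso_product_card_le_star_general [Finite att]
    (Q : Finset (Relation att dom)) (hB : BinaryQ Q)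
    (lam : ℕ) (hlam1 : 1 ≤ lam) (hlam2 : lam ≤ inputSize Q)
    (H : Finset att) :
    (∑ᶠ η ∈ config (HeavyOn Q lam) H,
        (JoinIso Q (HeavyOn Q lam) H η (isolatedSet Q H)).ncard)
      ≤ (JoinStar Q (HeavyOn Q lam) H).ncard :=
  finsum_mem_ncard_le_ncard_of_injOn
    (joinStar_finite fun _ _ => appearsOn_of_heavyOn Q hlam1 hlam2) (combine H)
    (fun _ hη _ hu => combine_mem_joinStar hB hη hu)
    (fun η _ => combine_injOn disjoint_isolatedSet η fun _ hu => hu.1)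
    (pairwiseDisjoint_image_combine (fun _ hη => hη.1) _)

/-- For a simple binary join query `Q`, `λ ∈ [1, m]`,
`H ⊆ attset Q` and `I` the set of isolated attributes:
`Σ_{η ∈ config(Q,H)} |Join(Q''_isolated(η))| ≤ |Join(Q*)|`. -/
theorem iso_product_card_le_star [Finite att] [Countable dom] [Infinite dom]
    (Q : Finset (Relation att dom)) (hS : SimpleQ Q) (hB : BinaryQ Q)
    (lam : ℕ) (hlam1 : 1 ≤ lam) (hlam2 : lam ≤ inputSize Q)
    (H : Finset att) (hH : H ⊆ attset Q) :
    (∑ᶠ η ∈ config (HeavyOn Q lam) H,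
        (JoinIso Q (HeavyOn Q lam) H η (isolatedSet Q H)).ncard)
      ≤ (JoinStar Q (HeavyOn Q lam) H).ncard :=
  iso_product_card_le_star_general Q hB lam hlam1 hlam2 H

end BinaryJoins
end

section
/- Let Q be a simple binary join query, H ⊆ attset(Q), I the set of isolated attributes, and W an arbitrary fractional edge packing of the hypergraph G defined by Q. Then the hypergraph G* defined by the query Q* admits a tight fractional edge covering W* satisfying Σ_{X ∈ H} W*({X}) = |H| − W_I, where W_I = Σ_{Y ∈ I} (weight of Y under W). -/
open scoped BigOperators Classical

namespace BinaryJoins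

/-! ### Hypergraphs, fractional edge coverings and packings

A hypergraph is given by a finite vertex set `V : Finset α` and a finite
edge set `E : Finset (Finset α)`.  A weight assignment is a function
`W : Finset α → ℝ` (only its values on `E` matter). -/

variable {α : Type} [DecidableEq α]

/-! ### Tuples, relations, and join queries

`dom` is the domain of values; a tuple over a set `U` of attributes is
represented as a function `att → Option dom` that is `some`-valued exactly
on `U`. -/

variable {att dom : Type}

variable [DecidableEq att]

/-- Let `Q` be a simple binary join query, `H ⊆ attset Q`,
`I` the set of isolated attributes, and `W` a fractional edge packing of the
hypergraph `G` of `Q`.  Then the hypergraph `G*` of `Q*` admits a tight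
fractional edge covering `W*` (all vertex weights exactly 1, edge weights in
`[0,1]`) with `Σ_{X ∈ H} W*({X}) = |H| − W_I`, where `W_I` is the total
weight of the vertices of `I` under `W`. -/
theorem star_tight_covering [Finite att] [Countable dom] [Infinite dom]
    (Q : Finset (Relation att dom)) (hS : SimpleQ Q) (hB : BinaryQ Q)
    (H : Finset att) (hH : H ⊆ attset Q)
    (W : Finset att → ℝ) (hW : IsFracEdgePack (attset Q) (edgeSet Q) W) :
    ∃ Wstar : Finset att → ℝ,
      (∀ e ∈ starEdges Q H, 0 ≤ Wstar e ∧ Wstar e ≤ 1) ∧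
      (∀ X ∈ isolatedSet Q H ∪ H, vertexWeight (starEdges Q H) Wstar X = 1) ∧
      (∑ X ∈ H, Wstar {X})
        = (H.card : ℝ) - ∑ Y ∈ isolatedSet Q H, vertexWeight (edgeSet Q) W Y := by
  classical
  set I := isolatedSet Q H with hIdef
  set Ec := (edgeSet Q).filter (fun e => IsCross H e ∧ (e ∩ I).Nonempty) with hEc
  have hstar : starEdges Q H
      = Ec ∪ H.image (fun X => ({X} : Finset att)) ∪ I.image (fun Y => ({Y} : Finset att)) := by
    rfl
  have hInotH : ∀ x ∈ I, x ∉ H := by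
    intro x hx
    have := Finset.mem_filter.1 hx
    exact (Finset.mem_sdiff.1 this.1).2
  have hIatt : ∀ x ∈ I, x ∈ attset Q := by
    intro x hx
    have := Finset.mem_filter.1 hx
    exact (Finset.mem_sdiff.1 this.1).1
  have hcard2 : ∀ e ∈ edgeSet Q, e.card = 2 := by
    intro e he
    obtain ⟨R, hR, rfl⟩ := Finset.mem_image.1 he
    exact hB R hR
  have hEcsub : Ec ⊆ edgeSet Q := Finset.filter_subset _ _
  have hstruct : ∀ e ∈ Ec, (e ∩ H).card = 1 ∧ (e ∩ I).card = 1 := by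
    intro e he
    obtain ⟨heE, ⟨hcross, hint⟩⟩ := Finset.mem_filter.1 he
    have hc2 : e.card = 2 := hcard2 e heE
    have hsplit : (e ∩ H).card + (e \ H).card = 2 := by
      rw [Finset.card_inter_add_card_sdiff]; exact hc2
    have h1 : 1 ≤ (e ∩ H).card := Finset.card_pos.2 hcross.1
    have h2 : 1 ≤ (e \ H).card := Finset.card_pos.2 hcross.2
    have hisub : e ∩ I ⊆ e \ H := by
      intro x hx
      have hx' := Finset.mem_inter.1 hx
      exact Finset.mem_sdiff.2 ⟨hx'.1, hInotH x hx'.2⟩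
    have h3 : (e ∩ I).card ≤ (e \ H).card := Finset.card_le_card hisub
    have h4 : 1 ≤ (e ∩ I).card := Finset.card_pos.2 hint
    exact ⟨by omega, by omega⟩
  have hIedge : ∀ Y ∈ I, (edgeSet Q).filter (fun e => Y ∈ e) = Ec.filter (fun e => Y ∈ e) := by
    intro Y hY
    ext e
    simp only [Finset.mem_filter]
    constructor
    · rintro ⟨heE, hYe⟩
      refine ⟨Finset.mem_filter.2 ⟨heE, ?_, ?_⟩, hYe⟩
      · obtain ⟨R, hR, rfl⟩ := Finset.mem_image.1 heE
        have hiso := (Finset.mem_filter.1 hY).2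
        have hsd : R.scheme \ H = {Y} := hiso R hR hYe
        have hc2 : R.scheme.card = 2 := hB R hR
        have hsplit : (R.scheme ∩ H).card + (R.scheme \ H).card = 2 := by
          rw [Finset.card_inter_add_card_sdiff]; exact hc2
        rw [hsd] at hsplit
        simp only [Finset.card_singleton] at hsplit
        constructor
        · exact Finset.card_pos.1 (by omega)
        · rw [hsd]; exact ⟨Y, Finset.mem_singleton_self Y⟩
      · exact ⟨Y, Finset.mem_inter.2 ⟨hYe, hY⟩⟩
    · rintro ⟨hf, hYe⟩
      exact ⟨hEcsub hf, hYe⟩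
  set crossW : att → ℝ := fun X => ∑ f ∈ Ec.filter (fun f => X ∈ f), W f with hcw
  have hWnn : ∀ f ∈ Ec, 0 ≤ W f := fun f hf => (hW.1 f (hEcsub hf)).1
  have hcwnn : ∀ X, 0 ≤ crossW X :=
    fun X => Finset.sum_nonneg fun f hf => hWnn f (Finset.mem_filter.1 hf).1
  have hcwle : ∀ X ∈ attset Q, crossW X ≤ 1 := by
    intro X hX
    have hsub : Ec.filter (fun f => X ∈ f) ⊆ (edgeSet Q).filter (fun f => X ∈ f) := by
      intro f hf
      have := Finset.mem_filter.1 hf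
      exact Finset.mem_filter.2 ⟨hEcsub this.1, this.2⟩
    calc crossW X ≤ ∑ f ∈ (edgeSet Q).filter (fun f => X ∈ f), W f :=
          Finset.sum_le_sum_of_subset_of_nonneg hsub
            (fun f hf _ => (hW.1 f (Finset.mem_filter.1 hf).1).1)
      _ ≤ 1 := hW.2 X hX
  set Wstar : Finset att → ℝ :=
    fun e => if e.card = 2 then W e else 1 - ∑ f ∈ Ec.filter (fun f => e ⊆ f), W f
    with hWs
  have hWsEc : ∀ e ∈ Ec, Wstar e = W e := by
    intro e he
    simp only [hWs]
    rw [if_pos (hcard2 e (hEcsub he))]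
  have hWssing : ∀ Z : att, Wstar {Z} = 1 - crossW Z := by
    intro Z
    simp only [hWs]
    rw [if_neg (by simp)]
    have hfeq : Ec.filter (fun f => ({Z} : Finset att) ⊆ f) = Ec.filter (fun f => Z ∈ f) := by
      apply Finset.filter_congr
      intro f _
      simp [Finset.singleton_subset_iff]
    rw [hfeq]
  refine ⟨Wstar, ?_, ?_, ?_⟩
  · intro e he
    rw [hstar] at he
    simp only [Finset.mem_union, Finset.mem_image] at he
    rcases he with (he | ⟨Z, hZ, rfl⟩) | ⟨Z, hZ, rfl⟩
    · rw [hWsEc e he]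
      exact hW.1 e (hEcsub he)
    · rw [hWssing Z]
      have h1 := hcwnn Z
      have h2 := hcwle Z (hH hZ)
      constructor <;> linarith
    · rw [hWssing Z]
      have h1 := hcwnn Z
      have h2 := hcwle Z (hIatt Z hZ)
      constructor <;> linarith
  · intro X hX
    have hXIH : X ∈ I ∨ X ∈ H := by
      rcases Finset.mem_union.1 hX with h | h
      exacts [Or.inl h, Or.inr h]
    have hfilter : (starEdges Q H).filter (fun e => X ∈ e)
        = insert {X} (Ec.filter (fun e => X ∈ e)) := by
      ext e
      simp only [hstar, Finset.mem_filter, Finset.mem_union, Finset.mem_image,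
        Finset.mem_insert]
      constructor
      · rintro ⟨(he | ⟨Z, hZ, rfl⟩) | ⟨Z, hZ, rfl⟩, hXe⟩
        · exact Or.inr ⟨he, hXe⟩
        · left; rw [Finset.mem_singleton] at hXe; rw [hXe]
        · left; rw [Finset.mem_singleton] at hXe; rw [hXe]
      · rintro (rfl | ⟨he, hXe⟩)
        · refine ⟨?_, Finset.mem_singleton_self X⟩
          rcases hXIH with h | h
          · exact Or.inr ⟨X, h, rfl⟩
          · exact Or.inl (Or.inr ⟨X, h, rfl⟩)
        · exact ⟨Or.inl (Or.inl he), hXe⟩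
    have hnotmem : ({X} : Finset att) ∉ Ec.filter (fun e => X ∈ e) := by
      intro h
      have := hcard2 {X} (hEcsub (Finset.mem_filter.1 h).1)
      simp at this
    rw [vertexWeight, hfilter, Finset.sum_insert hnotmem, hWssing X]
    have hrest : ∑ e ∈ Ec.filter (fun e => X ∈ e), Wstar e
        = crossW X := by
      apply Finset.sum_congr rfl
      intro e he
      exact hWsEc e (Finset.mem_filter.1 he).1
    rw [hrest]
    ring
  · have hdc : ∀ S : Finset att, (∀ f ∈ Ec, (f ∩ S).card = 1) →
        ∑ X ∈ S, crossW X = ∑ f ∈ Ec, W f := by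
      intro S hcard
      have h1 : ∑ X ∈ S, crossW X = ∑ X ∈ S, ∑ f ∈ Ec, if X ∈ f then W f else 0 := by
        apply Finset.sum_congr rfl
        intro X _
        simp only [hcw]
        rw [Finset.sum_filter]
      rw [h1, Finset.sum_comm]
      apply Finset.sum_congr rfl
      intro f hf
      rw [← Finset.sum_filter]
      have h2 : S.filter (fun X => X ∈ f) = f ∩ S := by
        ext x; simp [Finset.mem_inter, and_comm]
      rw [h2, Finset.sum_const, hcard f hf]
      simp
    have hH1 : ∑ X ∈ H, crossW X = ∑ f ∈ Ec, W f :=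
      hdc H (fun f hf => (hstruct f hf).1)
    have hI1 : ∑ X ∈ I, crossW X = ∑ f ∈ Ec, W f :=
      hdc I (fun f hf => (hstruct f hf).2)
    have hIvw : ∑ Y ∈ I, vertexWeight (edgeSet Q) W Y = ∑ Y ∈ I, crossW Y := by
      apply Finset.sum_congr rfl
      intro Y hY
      rw [vertexWeight, hIedge Y hY]
    calc ∑ X ∈ H, Wstar {X}
        = ∑ X ∈ H, (1 - crossW X) := Finset.sum_congr rfl (fun X _ => hWssing X)
      _ = (H.card : ℝ) - ∑ X ∈ H, crossW X := by
          rw [Finset.sum_sub_distrib]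
          simp
      _ = (H.card : ℝ) - ∑ Y ∈ I, vertexWeight (edgeSet Q) W Y := by
          rw [hH1, hIvw, hI1]

end BinaryJoins
end
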